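/- arXiv:1804.00366 — 4 statements merged into one kernel-verified Lean document; each statement's English description precedes it below -/
import Mathlib

section
/- For every f ∈ Ω^0(T,D;L) with ∇_t f = 0 one has f = 0; that is, the kernel of ∇_t : Ω^0(T,D;L) → Ω^1(T,D;L) (the zeroth relative algebraic twisted de Rham cohomology group H^0_alg(T,D;L)) vanishes, for all values of the parameters α_0, …, α_{m+2}. -/
open Polynomial

noncomputable section

/-- Formal derivative of a rational function over `ℂ`. -/
def ratDeriv (f : RatFunc ℂ) : RatFunc ℂ :=
  (algebraMap (Polynomial ℂ) (RatFunc ℂ) (derivative f.num) *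
      algebraMap (Polynomial ℂ) (RatFunc ℂ) f.denom -
    algebraMap (Polynomial ℂ) (RatFunc ℂ) f.num *
      algebraMap (Polynomial ℂ) (RatFunc ℂ) (derivative f.denom)) /
    algebraMap (Polynomial ℂ) (RatFunc ℂ) f.denom ^ 2

/-- Order of vanishing of a rational function at a point `p ∈ ℂ`. -/
def ordAt (f : RatFunc ℂ) (p : ℂ) : ℤ :=
  (f.num.rootMultiplicity p : ℤ) - (f.denom.rootMultiplicity p : ℤ)

/-- `f` vanishes to order at least `k` at `p` (the zero function counts). -/
def ordGE (f : RatFunc ℂ) (p : ℂ) (k : ℤ) : Prop :=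
  f = 0 ∨ k ≤ ordAt f p

/-- `f` vanishes to order at least `k` at `∞`. -/
def ordInfGE (f : RatFunc ℂ) (k : ℤ) : Prop :=
  f = 0 ∨ k ≤ (f.denom.natDegree : ℤ) - (f.num.natDegree : ℤ)

/-- `f` has no poles in `ℂ` outside the points `x 0, …, x (m+1)`. -/
def NoPolesOutside (m : ℕ) (x : ℕ → ℂ) (f : RatFunc ℂ) : Prop :=
  ∀ p : ℂ, (∀ i ≤ m + 1, p ≠ x i) → ordGE f p 0

/-- The logarithmic derivative `ω = Σ_{i=0}^{m+1} α_i/(t - x_i)` of `u`. -/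
def omegaFD (m : ℕ) (x α : ℕ → ℂ) : RatFunc ℂ :=
  ∑ i ∈ Finset.range (m + 2), RatFunc.C (α i) / (RatFunc.X - RatFunc.C (x i))

/-- The twisted differential `∇_t f = f' + ω f`. -/
def nablaFD (m : ℕ) (x α : ℕ → ℂ) (f : RatFunc ℂ) : RatFunc ℂ :=
  ratDeriv f + omegaFD m x α * f

/-- The space `Ω^0(T,D;L)`: rational functions with poles only at the `x_i`,
with `ord_{x_i} f ≥ 1 - α_i` for each `i ∈ I_D` (for `i ≤ m` this means
`α_i ∈ {0,1,2,…}`; for `i = m+1, m+2` it means `α_i ∈ {1,2,3,…}`). -/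
def OmegaRel0 (m : ℕ) (x α : ℕ → ℂ) : Set (RatFunc ℂ) :=
  {f | NoPolesOutside m x f ∧
    (∀ i ≤ m, ∀ n : ℕ, α i = (n : ℂ) → ordGE f (x i) (1 - (n : ℤ))) ∧
    (∀ n : ℕ, α (m + 1) = (n : ℂ) + 1 → ordGE f (x (m + 1)) (1 - ((n : ℤ) + 1))) ∧
    (∀ n : ℕ, α (m + 2) = (n : ℂ) + 1 → ordInfGE f (1 - ((n : ℤ) + 1)))}

/-!
If `∇f = 0` with `f ≠ 0`, then `f'/f = -ω`. Comparing the residues of both sides at every point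
of `ℂ` gives `ord_{x_i} f = -α_i` for `i ≤ m + 1` and `ord_p f = 0` elsewhere; in particular
every `α_i` is an integer. The conditions defining `Ω^0(T,D;L)` then force `ord_{x_i} f ≥ 1`
for `i ≤ m` and `ord_{x_{m+1}} f ≥ 0`, so `deg f = Σ_i ord_{x_i} f ≥ m + 1 > 0`. But
`deg f = -Σ_{i ≤ m+1} α_i = α_{m+2}`, so `m + 2 ∈ I_D` and the condition at `∞` reads
`-deg f = ord_∞ f ≥ 1 - α_{m+2} = 1 - deg f`, which is absurd.
-/

theorem Polynomial.natDegree_eq_sum_rootMultiplicity {k : Type*} [Field k] [IsAlgClosed k]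
    {P : k[X]} (F : Finset k) (hF : ∀ p, P.IsRoot p → p ∈ F) :
    P.natDegree = ∑ p ∈ F, P.rootMultiplicity p := by
  classical
  rw [← IsAlgClosed.card_roots_eq_natDegree,
    ← Multiset.sum_count_eq_card fun p hp => hF p (isRoot_of_mem_roots hp)]
  simp only [count_roots]

theorem Polynomial.ne_zero_of_eval_ne_zero {R : Type*} [Semiring R] {P : R[X]} {p : R}
    (h : P.eval p ≠ 0) : P ≠ 0 :=
  fun h0 => h (by rw [h0, eval_zero])

theorem Polynomial.X_sub_C_mul_derivative_pow_mul {R : Type*} [CommRing R] (p : R) (k : ℕ)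
    (Q : R[X]) :
    (X - C p) * derivative ((X - C p) ^ k * Q) =
      C (k : R) * ((X - C p) ^ k * Q) + (X - C p) ^ (k + 1) * derivative Q := by
  rw [derivative_mul, derivative_X_sub_C_pow]
  cases k with
  | zero => simp
  | succ k => simp only [Nat.add_sub_cancel]; ring

namespace RatFunc

variable {K : Type*} [Field K]

def RegularAt (p : K) (g : RatFunc K) : Prop :=
  ∃ A B : K[X], B.eval p ≠ 0 ∧
    g = algebraMap K[X] (RatFunc K) A / algebraMap K[X] (RatFunc K) B

theorem regularAt_algebraMap_div {p : K} (A : K[X]) {B : K[X]} (hB : B.eval p ≠ 0) :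
    RegularAt p (algebraMap K[X] (RatFunc K) A / algebraMap K[X] (RatFunc K) B) :=
  ⟨A, B, hB, rfl⟩

theorem regularAt_zero (p : K) : RegularAt p 0 :=
  ⟨0, 1, by simp, by simp⟩

theorem RegularAt.add {p : K} {g h : RatFunc K} (hg : RegularAt p g) (hh : RegularAt p h) :
    RegularAt p (g + h) := by
  obtain ⟨A, B, hB, rfl⟩ := hg
  obtain ⟨A', B', hB', rfl⟩ := hh
  refine ⟨A * B' + B * A', B * B', by simp [hB, hB'], ?_⟩
  rw [div_add_div _ _ (algebraMap_ne_zero (Polynomial.ne_zero_of_eval_ne_zero hB))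
    (algebraMap_ne_zero (Polynomial.ne_zero_of_eval_ne_zero hB'))]
  simp only [map_add, map_mul]

theorem RegularAt.neg {p : K} {g : RatFunc K} (hg : RegularAt p g) : RegularAt p (-g) := by
  obtain ⟨A, B, hB, rfl⟩ := hg
  exact ⟨-A, B, hB, by rw [map_neg, neg_div]⟩

theorem RegularAt.sub {p : K} {g h : RatFunc K} (hg : RegularAt p g) (hh : RegularAt p h) :
    RegularAt p (g - h) := by
  simpa only [sub_eq_add_neg] using hg.add hh.neg

theorem regularAt_sum {ι : Type*} {p : K} (s : Finset ι) {g : ι → RatFunc K}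
    (hg : ∀ i ∈ s, RegularAt p (g i)) : RegularAt p (∑ i ∈ s, g i) := by
  classical
  induction s using Finset.induction_on with
  | empty => simpa using regularAt_zero p
  | insert a s ha ih =>
    rw [Finset.sum_insert ha]
    exact (hg a (s.mem_insert_self a)).add (ih fun i hi => hg i (Finset.mem_insert_of_mem hi))

theorem regularAt_C_div_X_sub_C {p : K} (c : K) {q : K} (hq : q ≠ p) :
    RegularAt p (C c / (X - C q)) := by
  rw [← algebraMap_C, ← algebraMap_X, ← algebraMap_C, ← map_sub]
  exact regularAt_algebraMap_div _ (by simpa [sub_eq_zero] using hq.symm)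

theorem eq_zero_of_regularAt_C_div_X_sub_C {p c : K} (h : RegularAt p (C c / (X - C p))) :
    c = 0 := by
  obtain ⟨A, B, hB, h⟩ := h
  rw [← algebraMap_C, ← algebraMap_X, ← algebraMap_C, ← map_sub,
    div_eq_div_iff (algebraMap_ne_zero (X_sub_C_ne_zero p))
      (algebraMap_ne_zero (Polynomial.ne_zero_of_eval_ne_zero hB)), ← map_mul, ← map_mul] at h
  have := congrArg (Polynomial.eval p) (algebraMap_injective K h)
  simp only [Polynomial.eval_mul, Polynomial.eval_C, Polynomial.eval_sub, Polynomial.eval_X,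
    sub_self, mul_zero] at this
  exact (mul_eq_zero.1 this).resolve_right hB

-- With `P = (X - p) ^ k * Q` and `Q p ≠ 0`, the difference is `Q' / Q`.
theorem regularAt_logDeriv_sub_C_div_X_sub_C {P : K[X]} (hP : P ≠ 0) (p : K) :
    RegularAt p (algebraMap K[X] (RatFunc K) (derivative P) / algebraMap K[X] (RatFunc K) P -
      C (P.rootMultiplicity p : K) / (X - C p)) := by
  obtain ⟨Q, hPQ, hQ⟩ := exists_eq_pow_rootMultiplicity_mul_and_not_dvd P hP p
  rw [dvd_iff_isRoot] at hQ
  convert regularAt_algebraMap_div (derivative Q) hQ using 1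
  rw [← algebraMap_C, ← algebraMap_X, ← algebraMap_C, ← map_sub,
    div_sub_div _ _ (algebraMap_ne_zero hP) (algebraMap_ne_zero (X_sub_C_ne_zero p)),
    div_eq_div_iff (mul_ne_zero (algebraMap_ne_zero hP) (algebraMap_ne_zero (X_sub_C_ne_zero p)))
      (algebraMap_ne_zero (Polynomial.ne_zero_of_eval_ne_zero hQ))]
  simp only [← map_mul, ← map_sub]
  congr 1
  have key := Polynomial.X_sub_C_mul_derivative_pow_mul p (P.rootMultiplicity p) Q
  rw [← hPQ] at key
  linear_combination Q * key - (Polynomial.X - Polynomial.C p) * derivative Q * hPQ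

theorem ratDeriv_div_self {f : RatFunc ℂ} (hf : f ≠ 0) :
    ratDeriv f / f =
      algebraMap ℂ[X] (RatFunc ℂ) (derivative f.num) / algebraMap ℂ[X] (RatFunc ℂ) f.num -
        algebraMap ℂ[X] (RatFunc ℂ) (derivative f.denom) /
          algebraMap ℂ[X] (RatFunc ℂ) f.denom := by
  have hN := algebraMap_ne_zero (num_ne_zero hf)
  have hD := algebraMap_ne_zero (denom_ne_zero f)
  conv_lhs => arg 2; rw [← num_div_denom f]
  rw [ratDeriv]
  field_simp

theorem ordAt_eq_sum_of_ratDeriv_div_self_eq {ι : Type*} {f : RatFunc ℂ} (hf : f ≠ 0)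
    (s : Finset ι) (a y : ι → ℂ) (h : ratDeriv f / f = ∑ i ∈ s, C (a i) / (X - C (y i)))
    (p : ℂ) : (ordAt f p : ℂ) = ∑ i ∈ s with y i = p, a i := by
  have hsplit : ∑ i ∈ s, C (a i) / (X - C (y i)) =
      C (∑ i ∈ s with y i = p, a i) / (X - C p) +
        ∑ i ∈ s with y i ≠ p, C (a i) / (X - C (y i)) := by
    rw [← Finset.sum_filter_add_sum_filter_not s (fun i => y i = p), map_sum, Finset.sum_div]
    congr 1
    exact Finset.sum_congr rfl fun i hi => by rw [(Finset.mem_filter.1 hi).2]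
  have hrest : RegularAt p (∑ i ∈ s with y i ≠ p, C (a i) / (X - C (y i))) :=
    regularAt_sum _ fun i hi => regularAt_C_div_X_sub_C _ (Finset.mem_filter.1 hi).2
  have hreg := ((regularAt_logDeriv_sub_C_div_X_sub_C (num_ne_zero hf) p).sub
    (regularAt_logDeriv_sub_C_div_X_sub_C (denom_ne_zero f) p)).sub hrest
  rw [eq_comm, ← sub_eq_zero]
  apply eq_zero_of_regularAt_C_div_X_sub_C (p := p)
  convert hreg using 1
  rw [ratDeriv_div_self hf, hsplit] at h
  rw [ordAt]
  push_cast
  simp only [map_sub, map_natCast]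
  linear_combination -h

theorem ordAt_eq_of_ratDeriv_div_self_eq {ι : Type*} {f : RatFunc ℂ} (hf : f ≠ 0)
    (s : Finset ι) (a : ι → ℂ) {y : ι → ℂ} (hy : Set.InjOn y s)
    (h : ratDeriv f / f = ∑ i ∈ s, C (a i) / (X - C (y i))) {i : ι} (hi : i ∈ s) :
    (ordAt f (y i) : ℂ) = a i := by
  rw [ordAt_eq_sum_of_ratDeriv_div_self_eq hf s a y h,
    Finset.sum_eq_single_of_mem i (by simp [hi])]
  intro j hj hji
  exact absurd (hy (Finset.mem_filter.1 hj).1 hi (Finset.mem_filter.1 hj).2) hji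

theorem ordAt_eq_zero_of_ratDeriv_div_self_eq {ι : Type*} {f : RatFunc ℂ} (hf : f ≠ 0)
    (s : Finset ι) (a y : ι → ℂ) (h : ratDeriv f / f = ∑ i ∈ s, C (a i) / (X - C (y i)))
    {p : ℂ} (hp : ∀ i ∈ s, y i ≠ p) : ordAt f p = 0 := by
  have := ordAt_eq_sum_of_ratDeriv_div_self_eq hf s a y h p
  rw [Finset.filter_false_of_mem hp, Finset.sum_empty] at this
  exact_mod_cast this

theorem ordAt_ne_zero_of_isRoot {f : RatFunc ℂ} (hf : f ≠ 0) {p : ℂ}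
    (h : f.num.IsRoot p ∨ f.denom.IsRoot p) : ordAt f p ≠ 0 := by
  intro h0
  have hmult : f.num.rootMultiplicity p = f.denom.rootMultiplicity p := by
    rw [ordAt] at h0
    omega
  have hboth : f.num.IsRoot p ∧ f.denom.IsRoot p := by
    simp only [← rootMultiplicity_pos (num_ne_zero hf),
      ← rootMultiplicity_pos (denom_ne_zero f), hmult, or_self] at h ⊢
    exact ⟨h, h⟩
  obtain hN | hD := aeval_ne_zero_of_isCoprime (isCoprime_num_denom f) p
  · exact hN hboth.1
  · exact hD hboth.2

theorem intDegree_eq_sum_ordAt {f : RatFunc ℂ} (hf : f ≠ 0) (F : Finset ℂ)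
    (hF : ∀ p ∉ F, ordAt f p = 0) : f.intDegree = ∑ p ∈ F, ordAt f p := by
  have hroots (p : ℂ) (hp : f.num.IsRoot p ∨ f.denom.IsRoot p) : p ∈ F :=
    by_contra fun hpF => ordAt_ne_zero_of_isRoot hf hp (hF p hpF)
  rw [intDegree, natDegree_eq_sum_rootMultiplicity F fun p hp => hroots p (Or.inl hp),
    natDegree_eq_sum_rootMultiplicity F fun p hp => hroots p (Or.inr hp)]
  push_cast
  rw [← Finset.sum_sub_distrib]
  rfl

theorem ratDeriv_div_self_of_nablaFD_eq_zero {m : ℕ} {x α : ℕ → ℂ} {f : RatFunc ℂ}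
    (hf : f ≠ 0) (h : nablaFD m x α f = 0) :
    ratDeriv f / f = ∑ i ∈ Finset.range (m + 2), C (-α i) / (X - C (x i)) := by
  have hω : ∑ i ∈ Finset.range (m + 2), C (-α i) / (X - C (x i)) = -omegaFD m x α := by
    rw [omegaFD, ← Finset.sum_neg_distrib]
    exact Finset.sum_congr rfl fun i _ => by rw [map_neg]; ring
  rw [hω, div_eq_iff hf]
  rw [nablaFD] at h
  linear_combination h

end RatFunc

theorem alpha_eq_neg_ordAt_of_nablaFD_eq_zero {m : ℕ} {x α : ℕ → ℂ}
    (hx : Set.InjOn x (Finset.range (m + 2))) {f : RatFunc ℂ} (hf : f ≠ 0)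
    (h : nablaFD m x α f = 0) {i : ℕ} (hi : i ≤ m + 1) :
    α i = ((-ordAt f (x i) : ℤ) : ℂ) := by
  rw [Int.cast_neg, RatFunc.ordAt_eq_of_ratDeriv_div_self_eq hf _ _ hx
    (RatFunc.ratDeriv_div_self_of_nablaFD_eq_zero hf h) (Finset.mem_range.2 (by omega)), neg_neg]

theorem intDegree_eq_sum_of_nablaFD_eq_zero {m : ℕ} {x α : ℕ → ℂ}
    (hx : Set.InjOn x (Finset.range (m + 2))) {f : RatFunc ℂ} (hf : f ≠ 0)
    (h : nablaFD m x α f = 0) :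
    f.intDegree = ∑ i ∈ Finset.range (m + 2), ordAt f (x i) := by
  rw [← Finset.sum_image hx]
  exact RatFunc.intDegree_eq_sum_ordAt hf _ fun p hp =>
    RatFunc.ordAt_eq_zero_of_ratDeriv_div_self_eq hf _ _ _
      (RatFunc.ratDeriv_div_self_of_nablaFD_eq_zero hf h) fun i hi hip =>
        hp (Finset.mem_image.2 ⟨i, hi, hip⟩)

-- The common shape of the three integrality conditions of `Ω^0`, with `-a` in the role of the
-- order: if `α = a` were an integer `≥ c`, the condition would give `-a ≥ 1 - a`.
theorem lt_of_forall_eq_natCast_add {α : ℂ} {a c : ℤ} (hα : α = a)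
    (h : ∀ n : ℕ, α = n + c → 1 - (n + c) ≤ -a) : a < c := by
  by_contra! hca
  obtain ⟨n, hn⟩ := Int.eq_ofNat_of_zero_le (sub_nonneg.2 hca)
  have := h n (by rw [hα]; exact_mod_cast (by omega : a = n + c))
  omega

theorem H0_alg_relative_vanishes_general
    (m : ℕ) (x α : ℕ → ℂ)
    (hxdist : ∀ i ≤ m + 1, ∀ j ≤ m + 1, i ≠ j → x i ≠ x j)
    (hsum : ∑ i ∈ Finset.range (m + 3), α i = 0)
    (f : RatFunc ℂ) (hf : f ∈ OmegaRel0 m x α)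
    (hker : nablaFD m x α f = 0) :
    f = 0 := by
  by_contra hf0
  obtain ⟨-, hfin, hlast, hinf⟩ := hf
  have hinj : Set.InjOn x (Finset.range (m + 2)) := fun i hi j hj hij => by
    by_contra hne
    exact hxdist i (by simp at hi; omega) j (by simp at hj; omega) hne hij
  have hα (i : ℕ) (hi : i ≤ m + 1) := alpha_eq_neg_ordAt_of_nablaFD_eq_zero hinj hf0 hker hi
  have hdeg := intDegree_eq_sum_of_nablaFD_eq_zero hinj hf0 hker
  have hαinf : α (m + 2) = (f.intDegree : ℂ) := by
    rw [Finset.sum_range_succ,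
      Finset.sum_congr rfl fun i hi => hα i (by simp at hi; omega)] at hsum
    push_cast [hdeg, Finset.sum_neg_distrib] at hsum ⊢
    linear_combination hsum
  have hord_pos (i : ℕ) (hi : i ≤ m) : 1 ≤ ordAt f (x i) := by
    have := lt_of_forall_eq_natCast_add (c := 0) (hα i (by omega)) fun n hn => by
      simpa using (hfin i hi n (by simpa using hn)).resolve_left hf0
    omega
  have hord_last : 0 ≤ ordAt f (x (m + 1)) := by
    have := lt_of_forall_eq_natCast_add (c := 1) (hα (m + 1) le_rfl) fun n hn => by
      simpa using (hlast n (by simpa using hn)).resolve_left hf0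
    omega
  have hdeg_lt : f.intDegree < 1 := lt_of_forall_eq_natCast_add hαinf fun n hn => by
    have := (hinf n (by simpa using hn)).resolve_left hf0
    rw [RatFunc.intDegree]
    omega
  have hlower := Finset.card_nsmul_le_sum (Finset.range (m + 1)) (fun i => ordAt f (x i)) 1
    fun i hi => hord_pos i (by simp at hi; omega)
  rw [hdeg, Finset.sum_range_succ] at hdeg_lt
  simp only [Finset.card_range, nsmul_eq_mul, mul_one] at hlower
  omega

/-- the kernel of `∇_t : Ω^0(T,D;L) → Ω^1(T,D;L)` vanishes,
i.e. `H^0_alg(T,D;L) = 0`, for all parameters `α`. -/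
theorem H0_alg_relative_vanishes
    (m : ℕ) (hm : 1 ≤ m) (x α : ℕ → ℂ)
    (hx0 : x 0 = 0) (hx1 : x (m + 1) = 1)
    (hxdist : ∀ i ≤ m + 1, ∀ j ≤ m + 1, i ≠ j → x i ≠ x j)
    (hsum : ∑ i ∈ Finset.range (m + 3), α i = 0)
    (f : RatFunc ℂ) (hf : f ∈ OmegaRel0 m x α)
    (hker : nablaFD m x α f = 0) :
    f = 0 :=
  H0_alg_relative_vanishes_general m x α hxdist hsum f hf hker

end
end

section
/- The kernel of ∇_t∨ : Ω^0(T∨,D∨;L∨) → Ω^1(T∨,D∨;L∨) vanishes, and the quotient ℂ-vector space H^1_alg(T∨,D∨;L∨) = Ω^1(T∨,D∨;L∨)/∇_t∨(Ω^0(T∨,D∨;L∨)) has dimension exactly m + 1, for all values of the parameters α_0, …, α_{m+2}. -/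
open Polynomial

noncomputable section

/-- The dual twisted differential `∇_t^∨ f = f' - ω f`. -/
def nablaDualFD (m : ℕ) (x α : ℕ → ℂ) (f : RatFunc ℂ) : RatFunc ℂ :=
  ratDeriv f - omegaFD m x α * f

/-- The space `Ω^0(T^∨,D^∨;L^∨)`: rational functions with poles only at the
`x_i`, with `ord_{x_i} f ≥ 1 + α_i` for each `i ∈ I_{D^∨}` (for `i ≤ m` this
means `α_i ∈ {-1,-2,…}`; for `i = m+1, m+2` it means `α_i ∈ {0,-1,-2,…}`). -/
def OmegaRel0Dual (m : ℕ) (x α : ℕ → ℂ) : Set (RatFunc ℂ) :=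
  {f | NoPolesOutside m x f ∧
    (∀ i ≤ m, ∀ n : ℕ, α i = -(n : ℂ) - 1 → ordGE f (x i) (-(n : ℤ))) ∧
    (∀ n : ℕ, α (m + 1) = -(n : ℂ) → ordGE f (x (m + 1)) (1 - (n : ℤ))) ∧
    (∀ n : ℕ, α (m + 2) = -(n : ℂ) → ordInfGE f (1 - (n : ℤ)))}

/-- The space `Ω^1(T^∨,D^∨;L^∨)`: rational functions `g` (thought of as
`g·dt`) with poles only at the `x_i`, with `ord_{x_i} g ≥ α_i` for each
`i ∈ I_{D^∨}`, `i ≤ m+1`, and `ord_∞ g ≥ 2 + α_{m+2}` when `m+2 ∈ I_{D^∨}`. -/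
def OmegaRel1Dual (m : ℕ) (x α : ℕ → ℂ) : Set (RatFunc ℂ) :=
  {f | NoPolesOutside m x f ∧
    (∀ i ≤ m, ∀ n : ℕ, α i = -(n : ℂ) - 1 → ordGE f (x i) (-((n : ℤ) + 1))) ∧
    (∀ n : ℕ, α (m + 1) = -(n : ℂ) → ordGE f (x (m + 1)) (-(n : ℤ))) ∧
    (∀ n : ℕ, α (m + 2) = -(n : ℂ) → ordInfGE f (2 - (n : ℤ)))}

/-!
Away from `x_0, …, x_{m+1}` every `f` is `A · ∏ (t - x_i)^{b_i}` with `A` a polynomial, and in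
these coordinates `∇_t^∨` becomes `A ↦ A' P - A R_b` with `P = ∏ (t - x_i)`. Evaluating at `x_i`
and comparing top coefficients shows that `∇_t^∨` lowers the order at `x_i`, and raises the order
at `∞`, by exactly one unless `α_i` is the order of `f` there (at `∞` this uses `∑ α_i = 0`). For
`f ∈ Ω^0` that exception only occurs where `f` has no pole: at a pole it would put `i` into
`I_{D^∨}` and contradict `ord f ≥ 1 + α_i`. Hence `∇_t^∨ f = 0` forces `ord_{x_i} f = α_i ≥ 0`
and `ord_∞ f = α_{m+2} ≥ 1`, against `∑ α_i = 0`; and `∇_t^∨` is strict for the filtrations of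
`Ω^0`, `Ω^1` by the pole order `N` allowed at the points outside `I_{D^∨}`. Their steps are finite
dimensional, of dimensions differing by `m + 1` once `N` is large (by `∑ α_i = 0` some point lies
outside `I_{D^∨}`), so a complement of the image of one step stays a complement at all later
steps, and a basis of it is a basis of `H^1`.
-/

local notation "ι" => algebraMap ℂ[X] (RatFunc ℂ)

section StrictFiltration

variable {K E F : Type*} [Field K] [AddCommGroup E] [Module K E] [AddCommGroup F] [Module K F]

lemma finrank_map_of_injOn (D : E →ₗ[K] F) (V : Submodule K E) [FiniteDimensional K V]
    (hinj : ∀ v ∈ V, D v = 0 → v = 0) : Module.finrank K (V.map D) = Module.finrank K V := by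
  rw [← LinearMap.range_domRestrict]
  refine LinearMap.finrank_range_of_inj ((injective_iff_map_eq_zero _).2 fun v hv => ?_)
  exact Subtype.ext (hinj v v.2 hv)

variable (D : E →ₗ[K] F) (V : ℕ → Submodule K E) (W : ℕ → Submodule K F)
  [∀ N, FiniteDimensional K (V N)] [∀ N, FiniteDimensional K (W N)]

/-- Strictness makes a complement `C` of `D (V N₀)` in `W N₀` disjoint from every `D (V N)`,
and counting dimensions gives `C ⊔ D (V N) = W N`. -/
lemma exists_complement_map_of_strict {d N₀ : ℕ} (hW : Monotone W) (hmap : ∀ N, (V N).map D ≤ W N)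
    (hinj : ∀ N, ∀ v ∈ V N, D v = 0 → v = 0)
    (hstrict : ∀ N N', ∀ v ∈ V N', D v ∈ W N → v ∈ V N)
    (hrank : ∀ N ≥ N₀, Module.finrank K (W N) = Module.finrank K (V N) + d) :
    ∃ C ≤ W N₀, Module.finrank K C = d ∧ (∀ N, Disjoint C ((V N).map D)) ∧
      ∀ N ≥ N₀, C ⊔ (V N).map D = W N := by
  obtain ⟨C, hdisj, hsup⟩ := IsModularLattice.exists_disjoint_and_sup_eq (hmap N₀)
  have hCW : C ≤ W N₀ := hsup ▸ le_sup_right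
  have : FiniteDimensional K C := Submodule.finiteDimensional_of_le hCW
  have hdisjN : ∀ N, Disjoint C ((V N).map D) := fun N => by
    rw [Submodule.disjoint_def]
    rintro _ hC ⟨v, hv, rfl⟩
    exact Submodule.disjoint_def.1 hdisj _ ⟨v, hstrict N₀ N v hv (hCW hC), rfl⟩ hC
  have hrankC : Module.finrank K C = d := by
    have := Submodule.finrank_sup_add_finrank_inf_eq ((V N₀).map D) C
    rw [hsup, hdisj.eq_bot, finrank_bot, finrank_map_of_injOn D _ (hinj N₀), hrank N₀ le_rfl]
      at this
    omega
  refine ⟨C, hCW, hrankC, hdisjN, fun N hN => ?_⟩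
  refine Submodule.eq_of_le_of_finrank_le (sup_le (hCW.trans (hW hN)) (hmap N)) ?_
  have := Submodule.finrank_sup_add_finrank_inf_eq C ((V N).map D)
  rw [(hdisjN N).eq_bot, finrank_bot, finrank_map_of_injOn D _ (hinj N), hrankC] at this
  have := hrank N hN
  omega

lemma exists_fin_basis_mod_map_of_strict {d N₀ : ℕ} (hW : Monotone W)
    (hmap : ∀ N, (V N).map D ≤ W N) (hinj : ∀ N, ∀ v ∈ V N, D v = 0 → v = 0)
    (hstrict : ∀ N N', ∀ v ∈ V N', D v ∈ W N → v ∈ V N)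
    (hrank : ∀ N ≥ N₀, Module.finrank K (W N) = Module.finrank K (V N) + d) :
    ∃ g : Fin d → F, (∀ i, g i ∈ W N₀) ∧
      (∀ N ≥ N₀, ∀ w ∈ W N, ∃ c : Fin d → K, ∃ v ∈ V N, w = ∑ i, c i • g i + D v) ∧
      (∀ c : Fin d → K, ∀ N, ∀ v ∈ V N, ∑ i, c i • g i = D v → c = 0) := by
  obtain ⟨C, hCW, hrankC, hdisj, hsup⟩ :=
    exists_complement_map_of_strict D V W hW hmap hinj hstrict hrank
  have : FiniteDimensional K C := Submodule.finiteDimensional_of_le hCW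
  let b := Module.finBasisOfFinrankEq K C hrankC
  have hsum_coe : ∀ c : Fin d → K, ((∑ i, c i • b i : C) : F) = ∑ i, c i • (b i : F) :=
    fun c => by simp
  refine ⟨fun i => b i, fun i => hCW (b i).2, fun N hN w hw => ?_, fun c N v hv hcv => ?_⟩
  · rw [← hsup N hN] at hw
    obtain ⟨u, hu, _, ⟨v, hv, rfl⟩, rfl⟩ := Submodule.mem_sup.1 hw
    refine ⟨b.repr ⟨u, hu⟩, v, hv, ?_⟩
    rw [← hsum_coe, b.sum_repr]
  · have hmem : ∑ i, c i • (b i : F) ∈ C ⊓ (V N).map D :=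
      ⟨hsum_coe c ▸ (∑ i, c i • b i).2, v, hv, hcv.symm⟩
    rw [(hdisj N).eq_bot, Submodule.mem_bot, ← hsum_coe, ZeroMemClass.coe_eq_zero] at hmem
    exact funext (Fintype.linearIndependent_iff.1 b.linearIndependent c hmem)

end StrictFiltration

section DerivativeTimesMonic

variable {R : Type*} [CommRing R] {A P : R[X]} {n : ℕ}

lemma natDegree_derivative_mul_le (hP : P.natDegree = n + 1) :
    (derivative A * P).natDegree ≤ A.natDegree + n := by
  rcases Nat.eq_zero_or_pos A.natDegree with hA | hA
  · rw [eq_C_of_natDegree_eq_zero hA, derivative_C, zero_mul, natDegree_zero]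
    exact Nat.zero_le _
  · have := natDegree_derivative_le A
    exact natDegree_mul_le.trans (by omega)

lemma coeff_derivative_mul (hP : P.Monic) (hPn : P.natDegree = n + 1) :
    (derivative A * P).coeff (A.natDegree + n) = A.natDegree * A.leadingCoeff := by
  cases hA : A.natDegree with
  | zero => rw [eq_C_of_natDegree_eq_zero hA, derivative_C, zero_mul, coeff_zero, Nat.cast_zero,
      zero_mul]
  | succ k =>
    have hA' : (derivative A).natDegree ≤ k := (natDegree_derivative_le A).trans (by omega)
    rw [show k + 1 + n = k + (n + 1) by ring, coeff_mul_add_eq_of_natDegree_le hA' hPn.le,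
      coeff_derivative, ← hPn, hP.coeff_natDegree, leadingCoeff, hA]
    push_cast
    ring

end DerivativeTimesMonic

lemma algebraMap_div_eq_iff {a b c d : ℂ[X]} (hb : b ≠ 0) (hd : d ≠ 0) :
    ι a / ι b = ι c / ι d ↔ a * d = c * b := by
  rw [div_eq_div_iff (RatFunc.algebraMap_ne_zero hb) (RatFunc.algebraMap_ne_zero hd),
    ← map_mul, ← map_mul, (RatFunc.algebraMap_injective ℂ).eq_iff]

lemma ratDeriv_div_algebraMap (p : ℂ[X]) {q : ℂ[X]} (hq : q ≠ 0) :
    ratDeriv (ι p / ι q) = ι (derivative p * q - p * derivative q) / ι (q ^ 2) := by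
  set f := ι p / ι q
  have hcross : f.num * q = p * f.denom := (RatFunc.num_mul_eq_mul_denom_iff hq).2 rfl
  have hder := congrArg derivative hcross
  simp only [derivative_mul] at hder
  rw [ratDeriv, ← map_mul, ← map_mul, ← map_sub, ← map_pow,
    algebraMap_div_eq_iff (pow_ne_zero 2 f.denom_ne_zero) (pow_ne_zero 2 hq)]
  linear_combination (q * f.denom) * hder -
    (derivative f.denom * q + derivative q * f.denom) * hcross

lemma ratDeriv_algebraMap (p : ℂ[X]) : ratDeriv (ι p) = ι (derivative p) := by
  simpa using ratDeriv_div_algebraMap p one_ne_zero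

lemma ratDeriv_add (f g : RatFunc ℂ) : ratDeriv (f + g) = ratDeriv f + ratDeriv g := by
  have hf := RatFunc.algebraMap_ne_zero f.denom_ne_zero
  have hg := RatFunc.algebraMap_ne_zero g.denom_ne_zero
  rw [← RatFunc.num_div_denom f, ← RatFunc.num_div_denom g, div_add_div _ _ hf hg, ← map_mul,
    ← map_mul, ← map_mul, ← map_add, ratDeriv_div_algebraMap _ (mul_ne_zero f.denom_ne_zero
      g.denom_ne_zero), ratDeriv_div_algebraMap _ f.denom_ne_zero,
    ratDeriv_div_algebraMap _ g.denom_ne_zero]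
  simp only [derivative_mul, map_sub, map_mul, map_add, map_pow]
  field_simp
  ring

lemma ratDeriv_mul (f g : RatFunc ℂ) : ratDeriv (f * g) = ratDeriv f * g + f * ratDeriv g := by
  have hf := RatFunc.algebraMap_ne_zero f.denom_ne_zero
  have hg := RatFunc.algebraMap_ne_zero g.denom_ne_zero
  rw [← RatFunc.num_div_denom f, ← RatFunc.num_div_denom g, div_mul_div_comm, ← map_mul,
    ← map_mul, ratDeriv_div_algebraMap _ (mul_ne_zero f.denom_ne_zero g.denom_ne_zero),
    ratDeriv_div_algebraMap _ f.denom_ne_zero, ratDeriv_div_algebraMap _ g.denom_ne_zero]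
  simp only [derivative_mul, map_sub, map_mul, map_add, map_pow]
  field_simp
  ring

lemma ratDeriv_C (c : ℂ) : ratDeriv (RatFunc.C c) = 0 := by
  rw [← RatFunc.algebraMap_C, ratDeriv_algebraMap, derivative_C, map_zero]

lemma ratDeriv_smul (c : ℂ) (f : RatFunc ℂ) : ratDeriv (c • f) = c • ratDeriv f := by
  rw [RatFunc.smul_eq_C_mul, ratDeriv_mul, ratDeriv_C, RatFunc.smul_eq_C_mul, zero_mul, zero_add]

section AdditiveOnNonzero

variable {K M : Type*} [Field K] [AddCommGroup M] {φ : K → M}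

lemma map_one_of_map_mul (hφ : ∀ f g : K, f ≠ 0 → g ≠ 0 → φ (f * g) = φ f + φ g) : φ 1 = 0 := by
  simpa using hφ 1 1 one_ne_zero one_ne_zero

lemma map_prod_of_map_mul (hφ : ∀ f g : K, f ≠ 0 → g ≠ 0 → φ (f * g) = φ f + φ g)
    {I : Type*} (s : Finset I) {g : I → K} (hg : ∀ i ∈ s, g i ≠ 0) :
    φ (∏ i ∈ s, g i) = ∑ i ∈ s, φ (g i) := by
  classical
  induction s using Finset.induction_on with
  | empty => simpa using map_one_of_map_mul hφ
  | insert a s ha ih =>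
    rw [Finset.prod_insert ha, Finset.sum_insert ha, hφ _ _ (hg a (Finset.mem_insert_self a s))
      (Finset.prod_ne_zero_iff.2 fun i hi => hg i (Finset.mem_insert_of_mem hi)),
      ih fun i hi => hg i (Finset.mem_insert_of_mem hi)]

lemma map_zpow_of_map_mul (hφ : ∀ f g : K, f ≠ 0 → g ≠ 0 → φ (f * g) = φ f + φ g)
    {f : K} (hf : f ≠ 0) (z : ℤ) : φ (f ^ z) = z • φ f := by
  have hpow : ∀ n : ℕ, φ (f ^ n) = n • φ f := fun n => by
    simpa using map_prod_of_map_mul hφ (Finset.range n) (g := fun _ => f) (fun _ _ => hf)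
  obtain ⟨n, rfl | rfl⟩ := z.eq_nat_or_neg
  · simpa using hpow n
  · have h := hφ _ _ (inv_ne_zero (pow_ne_zero n hf)) (pow_ne_zero n hf)
    rw [inv_mul_cancel₀ (pow_ne_zero n hf), map_one_of_map_mul hφ, hpow] at h
    rw [zpow_neg, zpow_natCast, neg_smul, natCast_zsmul]
    exact eq_neg_of_add_eq_zero_left h.symm

end AdditiveOnNonzero

lemma ordAt_algebraMap (p : ℂ[X]) (c : ℂ) : ordAt (ι p) c = p.rootMultiplicity c := by
  simp [ordAt, RatFunc.num_algebraMap, RatFunc.denom_algebraMap]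

lemma ordAt_mul {f g : RatFunc ℂ} (hf : f ≠ 0) (hg : g ≠ 0) (c : ℂ) :
    ordAt (f * g) c = ordAt f c + ordAt g c := by
  have h := congrArg (rootMultiplicity c) (RatFunc.num_denom_mul f g)
  rw [rootMultiplicity_mul (mul_ne_zero (RatFunc.num_ne_zero (mul_ne_zero hf hg))
      (mul_ne_zero f.denom_ne_zero g.denom_ne_zero)),
    rootMultiplicity_mul (mul_ne_zero f.denom_ne_zero g.denom_ne_zero),
    rootMultiplicity_mul (mul_ne_zero (mul_ne_zero (RatFunc.num_ne_zero hf)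
      (RatFunc.num_ne_zero hg)) (f * g).denom_ne_zero),
    rootMultiplicity_mul (mul_ne_zero (RatFunc.num_ne_zero hf) (RatFunc.num_ne_zero hg))] at h
  simp only [ordAt]
  omega

lemma eq_algebraMap_num_of_ordAt_nonneg {f : RatFunc ℂ} (hf : f ≠ 0)
    (h : ∀ p : ℂ, 0 ≤ ordAt f p) : f = ι f.num := by
  have hnoroot : ∀ r : ℂ, ¬ f.denom.IsRoot r := fun r hr => by
    have hnum : f.num.IsRoot r := by
      have := h r
      have := (rootMultiplicity_pos f.denom_ne_zero).2 hr
      exact (rootMultiplicity_pos (RatFunc.num_ne_zero hf)).1 (by simp only [ordAt] at *; omega)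
    obtain ⟨u, v, huv⟩ := RatFunc.isCoprime_num_denom f
    simpa [hnum.eq_zero, hr.eq_zero] using congrArg (eval r) huv
  have hdenom : f.denom = 1 := (RatFunc.monic_denom f).natDegree_eq_zero.1 <| by
    by_contra hd
    exact (IsAlgClosed.exists_root f.denom fun h => hd (natDegree_eq_of_degree_eq_some h)).elim
      hnoroot
  conv_lhs => rw [← RatFunc.num_div_denom f, hdenom, map_one, div_one]

def ratLogDeriv (f : RatFunc ℂ) : RatFunc ℂ := ratDeriv f / f

lemma ratLogDeriv_mul {f g : RatFunc ℂ} (hf : f ≠ 0) (hg : g ≠ 0) :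
    ratLogDeriv (f * g) = ratLogDeriv f + ratLogDeriv g := by
  rw [ratLogDeriv, ratLogDeriv, ratLogDeriv, ratDeriv_mul]
  field_simp

section Twist

variable (m : ℕ) (x : ℕ → ℂ)

def nodePoly : ℂ[X] := ∏ i ∈ Finset.range (m + 2), (X - C (x i))

def cofactor (i : ℕ) : ℂ[X] := ∏ j ∈ (Finset.range (m + 2)).erase i, (X - C (x j))

def twistFactor (b : ℕ → ℤ) : RatFunc ℂ :=
  ∏ i ∈ Finset.range (m + 2), (RatFunc.X - RatFunc.C (x i)) ^ b i

def twistMap (b : ℕ → ℤ) : ℂ[X] →ₗ[ℂ] RatFunc ℂ :=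
  LinearMap.mulRight ℂ (twistFactor m x b) ∘ₗ
    (IsScalarTower.toAlgHom ℂ ℂ[X] (RatFunc ℂ)).toLinearMap

/-- Order `≥ b i` at `x i`, order `≥ e` at `∞`, no other poles (`mem_twistSpace_iff`). -/
def twistSpace (b : ℕ → ℤ) (e : ℤ) : Submodule ℂ (RatFunc ℂ) :=
  (degreeLT ℂ (1 - e - ∑ i ∈ Finset.range (m + 2), b i).toNat).map (twistMap m x b)

variable {m x}

lemma nodePoly_monic : (nodePoly m x).Monic :=
  monic_prod_of_monic _ _ fun _ _ => monic_X_sub_C _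

lemma natDegree_nodePoly : (nodePoly m x).natDegree = m + 2 := by
  simp [nodePoly]

lemma cofactor_monic (i : ℕ) : (cofactor m x i).Monic :=
  monic_prod_of_monic _ _ fun _ _ => monic_X_sub_C _

lemma natDegree_cofactor {i : ℕ} (hi : i ≤ m + 1) : (cofactor m x i).natDegree = m + 1 := by
  rw [cofactor, natDegree_finsetProd_X_sub_C_eq_card, Finset.card_erase_of_mem (by simp; omega),
    Finset.card_range]
  rfl

lemma RatFunc.X_sub_C_eq_algebraMap (a : ℂ) :
    RatFunc.X - RatFunc.C a = ι (Polynomial.X - Polynomial.C a) := by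
  simp

lemma RatFunc.X_sub_C_ne_zero (a : ℂ) : (RatFunc.X - RatFunc.C a : RatFunc ℂ) ≠ 0 := by
  have h := Polynomial.X_sub_C_ne_zero a
  rw [RatFunc.X_sub_C_eq_algebraMap]
  exact RatFunc.algebraMap_ne_zero h

lemma twistFactor_ne_zero (b : ℕ → ℤ) : twistFactor m x b ≠ 0 :=
  Finset.prod_ne_zero_iff.2 fun _ _ => zpow_ne_zero _ (RatFunc.X_sub_C_ne_zero _)

lemma map_twistFactor_of_map_mul {M : Type*} [AddCommGroup M] {φ : RatFunc ℂ → M}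
    (hφ : ∀ f g : RatFunc ℂ, f ≠ 0 → g ≠ 0 → φ (f * g) = φ f + φ g) (b : ℕ → ℤ) :
    φ (twistFactor m x b) = ∑ i ∈ Finset.range (m + 2), b i • φ (RatFunc.X - RatFunc.C (x i)) := by
  rw [twistFactor, map_prod_of_map_mul hφ _ fun _ _ => zpow_ne_zero _ (RatFunc.X_sub_C_ne_zero _)]
  exact Finset.sum_congr rfl fun _ _ => map_zpow_of_map_mul hφ (RatFunc.X_sub_C_ne_zero _) _

lemma ordAt_twistFactor (b : ℕ → ℤ) (p : ℂ) :
    ordAt (twistFactor m x b) p = ∑ i ∈ Finset.range (m + 2), if p = x i then b i else 0 := by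
  rw [map_twistFactor_of_map_mul (φ := (ordAt · p)) (fun _ _ hf hg => ordAt_mul hf hg p)]
  refine Finset.sum_congr rfl fun i _ => ?_
  rw [RatFunc.X_sub_C_eq_algebraMap, ordAt_algebraMap, rootMultiplicity_X_sub_C]
  split_ifs <;> simp

lemma ordAt_twistFactor_self (hx : ∀ i ≤ m + 1, ∀ j ≤ m + 1, i ≠ j → x i ≠ x j)
    (b : ℕ → ℤ) {i : ℕ} (hi : i ≤ m + 1) : ordAt (twistFactor m x b) (x i) = b i := by
  rw [ordAt_twistFactor, Finset.sum_eq_single i]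
  · simp
  · intro j hj hji
    rw [if_neg (hx i hi j (by simp at hj; omega) (Ne.symm hji))]
  · simp; omega

lemma ordAt_twistFactor_of_forall_ne (b : ℕ → ℤ) {p : ℂ} (hp : ∀ i ≤ m + 1, p ≠ x i) :
    ordAt (twistFactor m x b) p = 0 := by
  rw [ordAt_twistFactor]
  exact Finset.sum_eq_zero fun i hi => if_neg (hp i (by simp at hi; omega))

lemma intDegree_twistFactor (b : ℕ → ℤ) :
    (twistFactor m x b).intDegree = ∑ i ∈ Finset.range (m + 2), b i := by
  rw [map_twistFactor_of_map_mul (fun _ _ => RatFunc.intDegree_mul)]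
  refine Finset.sum_congr rfl fun i _ => ?_
  rw [RatFunc.X_sub_C_eq_algebraMap, RatFunc.intDegree_polynomial, natDegree_X_sub_C]
  simp

lemma ratLogDeriv_twistFactor (b : ℕ → ℤ) :
    ratLogDeriv (twistFactor m x b) =
      ∑ i ∈ Finset.range (m + 2), RatFunc.C (b i : ℂ) / (RatFunc.X - RatFunc.C (x i)) := by
  rw [map_twistFactor_of_map_mul (fun _ _ => ratLogDeriv_mul)]
  refine Finset.sum_congr rfl fun i _ => ?_
  rw [ratLogDeriv, RatFunc.X_sub_C_eq_algebraMap, ratDeriv_algebraMap, derivative_X_sub_C,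
    map_one, zsmul_eq_mul, map_intCast, mul_one_div]

lemma twistFactor_sub_one (b : ℕ → ℤ) :
    twistFactor m x (fun i => b i - 1) = twistFactor m x b / ι (nodePoly m x) := by
  rw [nodePoly, map_prod, twistFactor, twistFactor, ← Finset.prod_div_distrib]
  refine Finset.prod_congr rfl fun i _ => ?_
  rw [zpow_sub₀ (RatFunc.X_sub_C_ne_zero _), zpow_one, RatFunc.X_sub_C_eq_algebraMap]

lemma twistFactor_neg_mul (b : ℕ → ℤ) :
    twistFactor m x (fun i => -b i) * twistFactor m x b = 1 := by
  rw [twistFactor, twistFactor, ← Finset.prod_mul_distrib]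
  exact Finset.prod_eq_one fun _ _ => by
    rw [← zpow_add₀ (RatFunc.X_sub_C_ne_zero _), neg_add_cancel, zpow_zero]

lemma twistMap_apply (b : ℕ → ℤ) (A : ℂ[X]) : twistMap m x b A = ι A * twistFactor m x b :=
  rfl

lemma twistMap_injective (b : ℕ → ℤ) : Function.Injective (twistMap m x b) := fun _ _ h =>
  RatFunc.algebraMap_injective ℂ (mul_right_cancel₀ (twistFactor_ne_zero b) h)

lemma twistMap_ne_zero (b : ℕ → ℤ) {A : ℂ[X]} (hA : A ≠ 0) : twistMap m x b A ≠ 0 :=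
  mul_ne_zero (RatFunc.algebraMap_ne_zero hA) (twistFactor_ne_zero b)

lemma ordAt_twistMap (b : ℕ → ℤ) {A : ℂ[X]} (hA : A ≠ 0) (p : ℂ) :
    ordAt (twistMap m x b A) p = A.rootMultiplicity p + ordAt (twistFactor m x b) p := by
  rw [twistMap_apply, ordAt_mul (RatFunc.algebraMap_ne_zero hA) (twistFactor_ne_zero b),
    ordAt_algebraMap]

lemma intDegree_twistMap (b : ℕ → ℤ) {A : ℂ[X]} (hA : A ≠ 0) :
    (twistMap m x b A).intDegree = A.natDegree + ∑ i ∈ Finset.range (m + 2), b i := by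
  rw [twistMap_apply, RatFunc.intDegree_mul (RatFunc.algebraMap_ne_zero hA)
    (twistFactor_ne_zero b), RatFunc.intDegree_polynomial, intDegree_twistFactor]

lemma exists_eq_twistMap (hx : ∀ i ≤ m + 1, ∀ j ≤ m + 1, i ≠ j → x i ≠ x j) {f : RatFunc ℂ}
    (hf : f ≠ 0) (hpoles : NoPolesOutside m x f) {b : ℕ → ℤ}
    (hb : ∀ i ≤ m + 1, b i ≤ ordAt f (x i)) : ∃ A, A ≠ 0 ∧ f = twistMap m x b A := by
  set g := f * twistFactor m x (fun i => -b i)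
  have hg : g ≠ 0 := mul_ne_zero hf (twistFactor_ne_zero _)
  have hord : ∀ p, 0 ≤ ordAt g p := fun p => by
    rw [ordAt_mul hf (twistFactor_ne_zero _)]
    by_cases hp : ∃ i ≤ m + 1, p = x i
    · obtain ⟨i, hi, rfl⟩ := hp
      rw [ordAt_twistFactor_self hx _ hi]
      linarith [hb i hi]
    · simp only [not_exists, not_and] at hp
      rw [ordAt_twistFactor_of_forall_ne _ hp]
      simpa [ordGE, hf] using hpoles p hp
  refine ⟨g.num, RatFunc.num_ne_zero hg, ?_⟩
  rw [twistMap_apply, ← eq_algebraMap_num_of_ordAt_nonneg hg hord, mul_assoc,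
    twistFactor_neg_mul, mul_one]

lemma mem_degreeLT_toNat_iff {A : ℂ[X]} (hA : A ≠ 0) (k : ℤ) :
    A ∈ degreeLT ℂ k.toNat ↔ (A.natDegree : ℤ) < k := by
  rw [mem_degreeLT, ← natDegree_lt_iff_degree_lt hA]
  omega

lemma mem_twistSpace_iff (hx : ∀ i ≤ m + 1, ∀ j ≤ m + 1, i ≠ j → x i ≠ x j) (b : ℕ → ℤ)
    (e : ℤ) (f : RatFunc ℂ) :
    f ∈ twistSpace m x b e ↔ f = 0 ∨ (NoPolesOutside m x f ∧
      (∀ i ≤ m + 1, b i ≤ ordAt f (x i)) ∧ f.intDegree ≤ -e) := by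
  have hdeg : ∀ A : ℂ[X], A ≠ 0 → (A ∈ degreeLT ℂ (1 - e - ∑ i ∈ Finset.range (m + 2), b i).toNat
      ↔ (twistMap m x b A).intDegree ≤ -e) := fun A hA => by
    rw [intDegree_twistMap b hA, mem_degreeLT_toNat_iff hA]
    omega
  constructor
  · rintro ⟨A, hAdeg, rfl⟩
    rcases eq_or_ne A 0 with rfl | hA
    · exact Or.inl (map_zero _)
    refine Or.inr ⟨fun p hp => Or.inr ?_, fun i hi => ?_, (hdeg A hA).1 hAdeg⟩
    · rw [ordAt_twistMap b hA, ordAt_twistFactor_of_forall_ne b hp]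
      omega
    · rw [ordAt_twistMap b hA, ordAt_twistFactor_self hx b hi]
      omega
  · rintro (rfl | ⟨hpoles, hb, he⟩)
    · exact Submodule.zero_mem _
    rcases eq_or_ne f 0 with rfl | hf
    · exact Submodule.zero_mem _
    obtain ⟨A, hA, rfl⟩ := exists_eq_twistMap hx hf hpoles hb
    exact ⟨A, (hdeg A hA).2 he, rfl⟩

lemma finrank_twistSpace (b : ℕ → ℤ) (e : ℤ) :
    Module.finrank ℂ (twistSpace m x b e) = (1 - e - ∑ i ∈ Finset.range (m + 2), b i).toNat := by
  rw [twistSpace, ← (Submodule.equivMapOfInjective _ (twistMap_injective b) _).finrank_eq,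
    (degreeLTEquiv ℂ _).finrank_eq, Module.finrank_fin_fun]

lemma twistSpace_mono (hx : ∀ i ≤ m + 1, ∀ j ≤ m + 1, i ≠ j → x i ≠ x j) {b b' : ℕ → ℤ}
    {e e' : ℤ} (hb : ∀ i ≤ m + 1, b' i ≤ b i) (he : e' ≤ e) :
    twistSpace m x b e ≤ twistSpace m x b' e' := fun f hf => by
  rw [mem_twistSpace_iff hx] at hf ⊢
  exact hf.imp_right fun ⟨hpoles, hord, hdeg⟩ =>
    ⟨hpoles, fun i hi => (hb i hi).trans (hord i hi), by omega⟩

instance (b : ℕ → ℤ) (e : ℤ) : FiniteDimensional ℂ (twistSpace m x b e) :=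
  Module.Finite.map _ _

end Twist

section TwistedDerivative

variable (m : ℕ) (x α : ℕ → ℂ)

def nablaDualLinear : RatFunc ℂ →ₗ[ℂ] RatFunc ℂ where
  toFun := nablaDualFD m x α
  map_add' f g := by
    simp only [nablaDualFD, ratDeriv_add]
    ring
  map_smul' c f := by
    simp only [nablaDualFD, ratDeriv_smul, RingHom.id_apply, smul_sub, mul_smul_comm]

def residuePoly (b : ℕ → ℤ) : ℂ[X] :=
  ∑ i ∈ Finset.range (m + 2), C (α i - b i) * cofactor m x i

def twistedDeriv (b : ℕ → ℤ) (A : ℂ[X]) : ℂ[X] :=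
  derivative A * nodePoly m x - A * residuePoly m x α b

variable {m x α}

lemma sum_C_div_X_sub_C (c : ℕ → ℂ) :
    ∑ i ∈ Finset.range (m + 2), RatFunc.C (c i) / (RatFunc.X - RatFunc.C (x i)) =
      ι (∑ i ∈ Finset.range (m + 2), C (c i) * cofactor m x i) / ι (nodePoly m x) := by
  rw [eq_div_iff (RatFunc.algebraMap_ne_zero nodePoly_monic.ne_zero), map_sum, Finset.sum_mul]
  refine Finset.sum_congr rfl fun i hi => ?_
  rw [nodePoly, ← Finset.mul_prod_erase _ _ hi, map_mul, ← cofactor, map_mul,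
    RatFunc.algebraMap_C, ← RatFunc.X_sub_C_eq_algebraMap]
  field_simp [RatFunc.X_sub_C_ne_zero]

lemma nablaDualFD_twistMap (b : ℕ → ℤ) (A : ℂ[X]) :
    nablaDualFD m x α (twistMap m x b A) =
      twistMap m x (fun i => b i - 1) (twistedDeriv m x α b A) := by
  have hU := twistFactor_ne_zero (m := m) (x := x) b
  have hP : ι (nodePoly m x) ≠ 0 := RatFunc.algebraMap_ne_zero nodePoly_monic.ne_zero
  have hω : omegaFD m x α = ratLogDeriv (twistFactor m x b) +
      ι (residuePoly m x α b) / ι (nodePoly m x) := by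
    rw [residuePoly, ← sum_C_div_X_sub_C, ratLogDeriv_twistFactor, omegaFD,
      ← Finset.sum_add_distrib]
    refine Finset.sum_congr rfl fun i _ => ?_
    rw [map_sub, sub_div]
    ring
  have hderiv : ratDeriv (twistFactor m x b) =
      ratLogDeriv (twistFactor m x b) * twistFactor m x b := by
    rw [ratLogDeriv, div_mul_cancel₀ _ hU]
  rw [nablaDualFD, twistMap_apply, twistMap_apply, twistFactor_sub_one, ratDeriv_mul,
    ratDeriv_algebraMap, hderiv, hω, twistedDeriv, map_sub, map_mul, map_mul]
  field_simp
  ring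

end TwistedDerivative

section LocalBehaviour

variable {m : ℕ} {x α : ℕ → ℂ}

lemma eval_cofactor_self_ne_zero (hx : ∀ i ≤ m + 1, ∀ j ≤ m + 1, i ≠ j → x i ≠ x j) {i : ℕ}
    (hi : i ≤ m + 1) : (cofactor m x i).eval (x i) ≠ 0 := by
  rw [cofactor, eval_prod, Finset.prod_ne_zero_iff]
  intro j hj
  rw [Finset.mem_erase, Finset.mem_range] at hj
  simpa [sub_eq_zero] using hx i hi j (by omega) (Ne.symm hj.1)

lemma eval_residuePoly (b : ℕ → ℤ) {i : ℕ} (hi : i ≤ m + 1) :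
    (residuePoly m x α b).eval (x i) = (α i - b i) * (cofactor m x i).eval (x i) := by
  rw [residuePoly, eval_finsetSum, Finset.sum_eq_single i]
  · rw [eval_mul, eval_C]
  · intro j _ hji
    have hmem : i ∈ (Finset.range (m + 2)).erase j :=
      Finset.mem_erase.2 ⟨hji.symm, Finset.mem_range.2 (by omega)⟩
    rw [eval_mul, cofactor, eval_prod, Finset.prod_eq_zero hmem (by simp), mul_zero]
  · simp; omega

lemma eval_twistedDeriv (b : ℕ → ℤ) (A : ℂ[X]) {i : ℕ} (hi : i ≤ m + 1) :
    (twistedDeriv m x α b A).eval (x i) =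
      -(A.eval (x i) * (α i - b i) * (cofactor m x i).eval (x i)) := by
  have hP : (nodePoly m x).eval (x i) = 0 := eval_eq_zero_of_dvd_of_eval_eq_zero
    (Finset.dvd_prod_of_mem (fun j => X - C (x j)) (Finset.mem_range.2 (by omega : i < m + 2)))
    (by simp)
  rw [twistedDeriv, eval_sub, eval_mul, eval_mul, hP, eval_residuePoly b hi]
  ring

lemma natDegree_residuePoly_le (b : ℕ → ℤ) : (residuePoly m x α b).natDegree ≤ m + 1 :=
  natDegree_sum_le_of_forall_le _ _ fun i hi => natDegree_C_mul_le _ _ |>.trans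
    (natDegree_cofactor (by simp at hi; omega)).le

lemma coeff_residuePoly (b : ℕ → ℤ) :
    (residuePoly m x α b).coeff (m + 1) = ∑ i ∈ Finset.range (m + 2), (α i - b i) := by
  rw [residuePoly, finsetSum_coeff]
  refine Finset.sum_congr rfl fun i hi => ?_
  rw [coeff_C_mul, ← natDegree_cofactor (x := x) (i := i) (by simp at hi; omega),
    (cofactor_monic i).coeff_natDegree, mul_one]

lemma natDegree_twistedDeriv_le (b : ℕ → ℤ) (A : ℂ[X]) :
    (twistedDeriv m x α b A).natDegree ≤ A.natDegree + m + 1 := by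
  have hR := natDegree_residuePoly_le (m := m) (x := x) (α := α) b
  have hAR := natDegree_mul_le (p := A) (q := residuePoly m x α b)
  exact (natDegree_sub_le _ _).trans
    (max_le (natDegree_derivative_mul_le natDegree_nodePoly) (by omega))

lemma coeff_twistedDeriv (b : ℕ → ℤ) (A : ℂ[X]) :
    (twistedDeriv m x α b A).coeff (A.natDegree + m + 1) =
      A.leadingCoeff * (A.natDegree - ∑ i ∈ Finset.range (m + 2), (α i - b i)) := by
  rw [twistedDeriv, coeff_sub, add_assoc, coeff_derivative_mul nodePoly_monic natDegree_nodePoly,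
    coeff_mul_add_eq_of_natDegree_le le_rfl (natDegree_residuePoly_le b),
    coeff_residuePoly, leadingCoeff]
  ring

lemma sum_sub_one (b : ℕ → ℤ) :
    ∑ i ∈ Finset.range (m + 2), (b i - 1) = ∑ i ∈ Finset.range (m + 2), b i - (m + 2) := by
  simp [Finset.sum_sub_distrib]

lemma ordAt_nablaDualFD_of_ne (hx : ∀ i ≤ m + 1, ∀ j ≤ m + 1, i ≠ j → x i ≠ x j)
    {f : RatFunc ℂ} (hf : f ≠ 0) (hpoles : NoPolesOutside m x f) {i : ℕ} (hi : i ≤ m + 1)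
    (hα : α i ≠ ordAt f (x i)) :
    nablaDualFD m x α f ≠ 0 ∧ ordAt (nablaDualFD m x α f) (x i) = ordAt f (x i) - 1 := by
  obtain ⟨A, hA, hfA⟩ := exists_eq_twistMap hx hf hpoles (b := fun j => ordAt f (x j))
    fun _ _ => le_rfl
  have hAi : A.eval (x i) ≠ 0 := fun h => by
    have hord := congrArg (ordAt · (x i)) hfA
    simp only [ordAt_twistMap _ hA, ordAt_twistFactor_self hx _ hi] at hord
    have := (rootMultiplicity_pos hA).2 h
    omega
  have hT : (twistedDeriv m x α (fun j => ordAt f (x j)) A).eval (x i) ≠ 0 := by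
    rw [eval_twistedDeriv _ _ hi, neg_ne_zero]
    exact mul_ne_zero (mul_ne_zero hAi (sub_ne_zero.2 hα)) (eval_cofactor_self_ne_zero hx hi)
  have hT0 : twistedDeriv m x α (fun j => ordAt f (x j)) A ≠ 0 := fun h => hT (by simp [h])
  rw [hfA, nablaDualFD_twistMap]
  refine ⟨twistMap_ne_zero _ hT0, ?_⟩
  rw [ordAt_twistMap _ hT0, ordAt_twistFactor_self hx _ hi, rootMultiplicity_eq_zero hT,
    ← hfA]
  ring

lemma intDegree_nablaDualFD_of_ne (hx : ∀ i ≤ m + 1, ∀ j ≤ m + 1, i ≠ j → x i ≠ x j)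
    {f : RatFunc ℂ} (hf : f ≠ 0) (hpoles : NoPolesOutside m x f)
    (hα : (f.intDegree : ℂ) ≠ ∑ i ∈ Finset.range (m + 2), α i) :
    nablaDualFD m x α f ≠ 0 ∧ (nablaDualFD m x α f).intDegree = f.intDegree - 1 := by
  obtain ⟨b, hb⟩ : ∃ b : ℕ → ℤ, ∀ i ≤ m + 1, b i ≤ ordAt f (x i) := ⟨_, fun _ _ => le_rfl⟩
  obtain ⟨A, hA, rfl⟩ := exists_eq_twistMap hx hf hpoles hb
  have hdeg := intDegree_twistMap (m := m) (x := x) b hA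
  have hcoeff : (twistedDeriv m x α b A).coeff (A.natDegree + m + 1) ≠ 0 := by
    rw [coeff_twistedDeriv]
    refine mul_ne_zero (leadingCoeff_ne_zero.2 hA) fun h => hα ?_
    rw [Finset.sum_sub_distrib] at h
    rw [hdeg]
    push_cast
    linear_combination h
  have hT0 : twistedDeriv m x α b A ≠ 0 := fun h => hcoeff (by simp [h])
  have hTdeg : (twistedDeriv m x α b A).natDegree = A.natDegree + m + 1 :=
    (natDegree_twistedDeriv_le b A).antisymm (le_natDegree_of_ne_zero hcoeff)
  rw [nablaDualFD_twistMap]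
  refine ⟨twistMap_ne_zero _ hT0, ?_⟩
  rw [intDegree_twistMap _ hT0, hTdeg, sum_sub_one, hdeg]
  push_cast
  ring

lemma nablaDualFD_mem_twistSpace {b : ℕ → ℤ} {e : ℤ} {f : RatFunc ℂ}
    (hf : f ∈ twistSpace m x b e) :
    nablaDualFD m x α f ∈ twistSpace m x (fun i => b i - 1) (e + 1) := by
  obtain ⟨A, hA, rfl⟩ := hf
  rw [nablaDualFD_twistMap]
  refine ⟨_, ?_, rfl⟩
  by_cases hT0 : twistedDeriv m x α b A = 0
  · rw [hT0]
    exact Submodule.zero_mem _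
  have hA0 : A ≠ 0 := by
    rintro rfl
    simp [twistedDeriv] at hT0
  rw [SetLike.mem_coe, mem_degreeLT_toNat_iff hA0] at hA
  have := natDegree_twistedDeriv_le (m := m) (x := x) (α := α) b A
  rw [SetLike.mem_coe, mem_degreeLT_toNat_iff hT0]
  beta_reduce
  rw [sum_sub_one]
  omega

end LocalBehaviour

section Cutoff

/-- The bound `1 + a` when `a = -n - s` for some `n : ℕ`, and the coarse bound `-N` otherwise. -/
def cutoff (a : ℂ) (s N : ℕ) : ℤ :=
  open Classical in if h : ∃ n : ℕ, a = -(n : ℂ) - s then 1 - s - h.choose else -N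

variable {a : ℂ} {s N : ℕ}

lemma cutoff_of_eq {n : ℕ} (h : a = -(n : ℂ) - s) : cutoff a s N = 1 - s - n := by
  have hex : ∃ n : ℕ, a = -(n : ℂ) - s := ⟨n, h⟩
  have hchoose : (hex.choose : ℂ) = n := by linear_combination hex.choose_spec - h
  rw [cutoff, dif_pos hex, Nat.cast_injective hchoose]

lemma cutoff_of_not (h : ¬∃ n : ℕ, a = -(n : ℂ) - s) : cutoff a s N = -N := dif_neg h

lemma cutoff_le_one_sub (hs : s ≤ 1) : cutoff a s N ≤ 1 - s := by
  by_cases h : ∃ n : ℕ, a = -(n : ℂ) - s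
  · obtain ⟨n, hn⟩ := h
    rw [cutoff_of_eq hn]
    omega
  · rw [cutoff_of_not h]
    omega

lemma cutoff_antitone (a : ℂ) (s : ℕ) : Antitone (cutoff a s) := fun N N' hN => by
  by_cases h : ∃ n : ℕ, a = -(n : ℂ) - s
  · obtain ⟨n, hn⟩ := h
    rw [cutoff_of_eq hn, cutoff_of_eq hn]
  · rw [cutoff_of_not h, cutoff_of_not h]
    omega

end Cutoff

section Filtration

variable (m : ℕ) (x α : ℕ → ℂ)

/-- `Ω^0(T^∨,D^∨;L^∨)` for `j = 0` and `Ω^1(T^∨,D^∨;L^∨)` for `j = 1`. -/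
def OmegaDual (j : ℤ) : Set (RatFunc ℂ) :=
  {f | NoPolesOutside m x f ∧
    (∀ i ≤ m, ∀ n : ℕ, α i = -(n : ℂ) - 1 → ordGE f (x i) (-n - j)) ∧
    (∀ n : ℕ, α (m + 1) = -(n : ℂ) → ordGE f (x (m + 1)) (1 - n - j)) ∧
    (∀ n : ℕ, α (m + 2) = -(n : ℂ) → ordInfGE f (1 - n + j))}

/-- The points `x_0, …, x_m` are resonant for `α_i ∈ {-1, -2, …}`, the points `x_{m+1}` and `∞`
for `α_i ∈ {0, -1, …}`. -/
def pointShift (i : ℕ) : ℕ := if i ≤ m then 1 else 0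

/-- Index `m + 2` is the point `∞`. -/
def orderCutoff (N i : ℕ) : ℤ := cutoff (α i) (pointShift m i) N

def filtration (j : ℤ) (N : ℕ) : Submodule ℂ (RatFunc ℂ) :=
  twistSpace m x (fun i => orderCutoff m α N i - j) (orderCutoff m α N (m + 2) + j)

variable {m x α}

lemma omegaRel0Dual_eq : OmegaRel0Dual m x α = OmegaDual m x α 0 := by
  simp [OmegaRel0Dual, OmegaDual]

lemma omegaRel1Dual_eq : OmegaRel1Dual m x α = OmegaDual m x α 1 := by
  simp only [OmegaRel1Dual, OmegaDual]
  ring_nf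

lemma ordInfGE_iff (f : RatFunc ℂ) (k : ℤ) : ordInfGE f k ↔ f = 0 ∨ k ≤ -f.intDegree := by
  rw [ordInfGE, RatFunc.intDegree, neg_sub]

lemma pointShift_le_one (i : ℕ) : pointShift m i ≤ 1 := by
  unfold pointShift
  split_ifs <;> simp

lemma pointShift_of_le {i : ℕ} (hi : i ≤ m) : pointShift m i = 1 := if_pos hi

lemma pointShift_of_lt {i : ℕ} (hi : m < i) : pointShift m i = 0 := if_neg (by omega)

lemma sub_le_ordAt_of_mem_OmegaDual {j : ℤ} {f : RatFunc ℂ} (hf : f ∈ OmegaDual m x α j)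
    (hf0 : f ≠ 0) {i : ℕ} (hi : i ≤ m + 1) {n : ℕ} (hn : α i = -(n : ℂ) - pointShift m i) :
    1 - pointShift m i - n - j ≤ ordAt f (x i) := by
  obtain ⟨-, hfin, hlast, -⟩ := hf
  rcases Nat.lt_or_ge m i with hm | hm
  · obtain rfl : i = m + 1 := by omega
    rw [pointShift_of_lt hm] at hn ⊢
    have := (hlast n (by simpa using hn)).resolve_left hf0
    omega
  · rw [pointShift_of_le hm] at hn ⊢
    have := (hfin i hm n (by simpa using hn)).resolve_left hf0
    omega

lemma le_neg_intDegree_of_mem_OmegaDual {j : ℤ} {f : RatFunc ℂ} (hf : f ∈ OmegaDual m x α j)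
    (hf0 : f ≠ 0) {n : ℕ} (hn : α (m + 2) = -(n : ℂ)) : 1 - n + j ≤ -f.intDegree :=
  ((ordInfGE_iff f _).1 (hf.2.2.2 n hn)).resolve_left hf0

lemma one_sub_pointShift_le_ordAt {f : RatFunc ℂ} (hf : f ∈ OmegaDual m x α 0) (hf0 : f ≠ 0)
    {i : ℕ} (hi : i ≤ m + 1) (hα : α i = ordAt f (x i)) :
    1 - (pointShift m i : ℤ) ≤ ordAt f (x i) := by
  by_contra! h
  obtain ⟨n, hn⟩ : ∃ n : ℕ, (n : ℤ) = -ordAt f (x i) - pointShift m i :=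
    ⟨_, Int.toNat_of_nonneg (by omega)⟩
  have := sub_le_ordAt_of_mem_OmegaDual hf hf0 hi (n := n)
    (by rw [hα, show ordAt f (x i) = -(n : ℤ) - pointShift m i by omega]; push_cast; ring)
  omega

lemma intDegree_neg_of_mem_OmegaDual {f : RatFunc ℂ} (hf : f ∈ OmegaDual m x α 0) (hf0 : f ≠ 0)
    (hα : α (m + 2) = -(f.intDegree : ℂ)) : f.intDegree < 0 := by
  by_contra! h
  obtain ⟨n, hn⟩ : ∃ n : ℕ, (n : ℤ) = f.intDegree := ⟨_, Int.toNat_of_nonneg h⟩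
  have := le_neg_intDegree_of_mem_OmegaDual hf hf0 (n := n) (by rw [hα, ← hn]; push_cast; ring)
  omega

lemma filtration_subset_OmegaDual (hx : ∀ i ≤ m + 1, ∀ j ≤ m + 1, i ≠ j → x i ≠ x j)
    (j : ℤ) (N : ℕ) : (filtration m x α j N : Set (RatFunc ℂ)) ⊆ OmegaDual m x α j := by
  intro f hf
  rw [SetLike.mem_coe, filtration, mem_twistSpace_iff hx] at hf
  rcases hf with rfl | ⟨hpoles, hord, hdeg⟩
  · exact ⟨fun _ _ => Or.inl rfl, fun _ _ _ _ => Or.inl rfl, fun _ _ => Or.inl rfl,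
      fun _ _ => Or.inl rfl⟩
  refine ⟨hpoles, fun i hi n hn => Or.inr ?_, fun n hn => Or.inr ?_, fun n hn => ?_⟩
  · have := hord i (by omega)
    rw [orderCutoff, pointShift_of_le hi, cutoff_of_eq (n := n) (by simpa using hn)] at this
    omega
  · have := hord (m + 1) le_rfl
    rw [orderCutoff, pointShift_of_lt (by omega), cutoff_of_eq (n := n) (by simpa using hn)]
      at this
    omega
  · rw [orderCutoff, pointShift_of_lt (by omega), cutoff_of_eq (n := n) (by simpa using hn)]
      at hdeg
    exact (ordInfGE_iff f _).2 (Or.inr (by omega))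

lemma exists_mem_filtration (hx : ∀ i ≤ m + 1, ∀ j ≤ m + 1, i ≠ j → x i ≠ x j) {j : ℤ}
    {f : RatFunc ℂ} (hf : f ∈ OmegaDual m x α j) (N₀ : ℕ) :
    ∃ N ≥ N₀, f ∈ filtration m x α j N := by
  rcases eq_or_ne f 0 with rfl | hf0
  · exact ⟨N₀, le_rfl, Submodule.zero_mem _⟩
  refine ⟨N₀ + ∑ i ∈ Finset.range (m + 2), (ordAt f (x i)).natAbs + f.intDegree.natAbs +
    j.natAbs, by omega, ?_⟩
  rw [filtration, mem_twistSpace_iff hx]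
  refine Or.inr ⟨hf.1, fun i hi => ?_, ?_⟩
  · by_cases hres : ∃ n : ℕ, α i = -(n : ℂ) - pointShift m i
    · obtain ⟨n, hn⟩ := hres
      rw [orderCutoff, cutoff_of_eq hn]
      exact sub_le_ordAt_of_mem_OmegaDual hf hf0 hi hn
    · have := Finset.single_le_sum (f := fun i => (ordAt f (x i)).natAbs) (by simp)
        (Finset.mem_range.2 (by omega : i < m + 2))
      rw [orderCutoff, cutoff_of_not hres]
      omega
  · by_cases hres : ∃ n : ℕ, α (m + 2) = -(n : ℂ)
    · obtain ⟨n, hn⟩ := hres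
      have := le_neg_intDegree_of_mem_OmegaDual hf hf0 hn
      rw [orderCutoff, pointShift_of_lt (by omega), cutoff_of_eq (n := n) (by simpa using hn)]
      omega
    · rw [orderCutoff, pointShift_of_lt (by omega), cutoff_of_not (by simpa using hres)]
      omega

instance (j : ℤ) (N : ℕ) : FiniteDimensional ℂ (filtration m x α j N) :=
  inferInstanceAs (FiniteDimensional ℂ (twistSpace _ _ _ _))

lemma orderCutoff_antitone (i : ℕ) : Antitone fun N => orderCutoff m α N i :=
  cutoff_antitone _ _

lemma filtration_mono (hx : ∀ i ≤ m + 1, ∀ j ≤ m + 1, i ≠ j → x i ≠ x j) (j : ℤ) :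
    Monotone (filtration m x α j) := fun N N' hN =>
  twistSpace_mono hx (fun i _ => by
      have : orderCutoff m α N' i ≤ orderCutoff m α N i := orderCutoff_antitone i hN
      omega)
    (by
      have : orderCutoff m α N' (m + 2) ≤ orderCutoff m α N (m + 2) := orderCutoff_antitone _ hN
      omega)

lemma finrank_filtration (j : ℤ) (N : ℕ) :
    Module.finrank ℂ (filtration m x α j N) =
      (1 - ∑ i ∈ Finset.range (m + 3), orderCutoff m α N i + (m + 1) * j).toNat := by
  rw [filtration, finrank_twistSpace, Finset.sum_range_succ _ (m + 2), Finset.sum_sub_distrib]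
  simp only [Finset.sum_const, Finset.card_range, nsmul_eq_mul]
  push_cast
  ring_nf

lemma nablaDualFD_mem_filtration {N : ℕ} {f : RatFunc ℂ} (hf : f ∈ filtration m x α 0 N) :
    nablaDualFD m x α f ∈ filtration m x α 1 N := by
  simpa [filtration] using nablaDualFD_mem_twistSpace (α := α) hf

lemma alpha_last_eq (hsum : ∑ i ∈ Finset.range (m + 3), α i = 0) :
    α (m + 2) = -∑ i ∈ Finset.range (m + 2), α i := by
  rw [Finset.sum_range_succ] at hsum
  linear_combination hsum

lemma nablaDualFD_eq_zero (hx : ∀ i ≤ m + 1, ∀ j ≤ m + 1, i ≠ j → x i ≠ x j)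
    (hsum : ∑ i ∈ Finset.range (m + 3), α i = 0) {f : RatFunc ℂ} (hf : f ∈ OmegaDual m x α 0)
    (hnabla : nablaDualFD m x α f = 0) : f = 0 := by
  by_contra hf0
  have hfin : ∀ i ≤ m + 1, α i = ordAt f (x i) := fun i hi => by
    by_contra hne
    exact (ordAt_nablaDualFD_of_ne hx hf0 hf.1 hi hne).1 hnabla
  have hinf : (f.intDegree : ℂ) = ∑ i ∈ Finset.range (m + 2), α i := by
    by_contra hne
    exact (intDegree_nablaDualFD_of_ne hx hf0 hf.1 hne).1 hnabla
  have hneg := intDegree_neg_of_mem_OmegaDual hf hf0 (by rw [alpha_last_eq hsum, hinf])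
  have hdeg : f.intDegree = ∑ i ∈ Finset.range (m + 2), ordAt f (x i) := by
    rw [Finset.sum_congr rfl fun i hi => hfin i (by simp at hi; omega)] at hinf
    exact_mod_cast hinf
  have hnonneg : 0 ≤ ∑ i ∈ Finset.range (m + 2), ordAt f (x i) :=
    Finset.sum_nonneg fun i hi => by
      have hi' : i ≤ m + 1 := by simp at hi; omega
      have := one_sub_pointShift_le_ordAt hf hf0 hi' (hfin i hi')
      have := pointShift_le_one (m := m) i
      omega
  omega

lemma mem_filtration_of_nablaDualFD_mem (hx : ∀ i ≤ m + 1, ∀ j ≤ m + 1, i ≠ j → x i ≠ x j)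
    (hsum : ∑ i ∈ Finset.range (m + 3), α i = 0) {f : RatFunc ℂ} (hf : f ∈ OmegaDual m x α 0)
    {N : ℕ} (hnabla : nablaDualFD m x α f ∈ filtration m x α 1 N) :
    f ∈ filtration m x α 0 N := by
  rcases eq_or_ne f 0 with rfl | hf0
  · exact Submodule.zero_mem _
  rw [filtration, mem_twistSpace_iff hx] at hnabla ⊢
  refine Or.inr ⟨hf.1, fun i hi => ?_, ?_⟩
  · have hcut := cutoff_le_one_sub (a := α i) (N := N) (pointShift_le_one (m := m) i)
    by_cases hα : α i = ordAt f (x i)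
    · have := one_sub_pointShift_le_ordAt hf hf0 hi hα
      rw [orderCutoff]
      omega
    · obtain ⟨hne, hord⟩ := ordAt_nablaDualFD_of_ne hx hf0 hf.1 hi hα
      have := (hnabla.resolve_left hne).2.1 i hi
      omega
  · have hcut := cutoff_le_one_sub (a := α (m + 2)) (N := N) (pointShift_le_one (m := m) (m + 2))
    by_cases hα : (f.intDegree : ℂ) = ∑ i ∈ Finset.range (m + 2), α i
    · have := intDegree_neg_of_mem_OmegaDual hf hf0 (by rw [alpha_last_eq hsum, hα])
      rw [orderCutoff]
      omega
    · obtain ⟨hne, hdeg⟩ := intDegree_nablaDualFD_of_ne hx hf0 hf.1 hα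
      have := (hnabla.resolve_left hne).2.2
      omega

lemma exists_not_resonant (hsum : ∑ i ∈ Finset.range (m + 3), α i = 0) :
    ∃ i < m + 3, ¬∃ n : ℕ, α i = -(n : ℂ) - pointShift m i := by
  by_contra! hres
  have hre : ∀ i < m + 3, (α i).re ≤ -(pointShift m i : ℝ) := fun i hi => by
    obtain ⟨n, hn⟩ := hres i hi
    rw [hn]
    simp
  have hsplit := congrArg Complex.re hsum
  rw [Complex.re_sum, Finset.sum_range_succ'] at hsplit
  have hrest : ∑ i ∈ Finset.range (m + 2), (α (i + 1)).re ≤ 0 :=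
    Finset.sum_nonpos fun i hi => (hre (i + 1) (by simp at hi; omega)).trans (by simp)
  have h0 := hre 0 (by omega)
  rw [pointShift_of_le (Nat.zero_le m), Nat.cast_one] at h0
  rw [Complex.zero_re] at hsplit
  linarith

lemma exists_sum_orderCutoff_nonpos (hsum : ∑ i ∈ Finset.range (m + 3), α i = 0) :
    ∃ N₀ : ℕ, ∀ N ≥ N₀, ∑ i ∈ Finset.range (m + 3), orderCutoff m α N i ≤ 0 := by
  obtain ⟨i₀, hi₀, hres⟩ := exists_not_resonant hsum
  refine ⟨(∑ i ∈ Finset.range (m + 3), orderCutoff m α 0 i).toNat, fun N hN => ?_⟩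
  have hgap : (N : ℤ) ≤ ∑ i ∈ Finset.range (m + 3), (orderCutoff m α 0 i - orderCutoff m α N i) :=
    calc (N : ℤ) = orderCutoff m α 0 i₀ - orderCutoff m α N i₀ := by
          simp [orderCutoff, cutoff_of_not hres]
      _ ≤ _ := Finset.single_le_sum (fun i _ => sub_nonneg.2 (cutoff_antitone _ _ (Nat.zero_le N)))
          (Finset.mem_range.2 hi₀)
  rw [Finset.sum_sub_distrib] at hgap
  omega

end Filtration

theorem dual_H0_vanishes_and_dim_H1_dual_general
    (m : ℕ) (x α : ℕ → ℂ)
    (hxdist : ∀ i ≤ m + 1, ∀ j ≤ m + 1, i ≠ j → x i ≠ x j)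
    (hsum : ∑ i ∈ Finset.range (m + 3), α i = 0) :
    (∀ f ∈ OmegaRel0Dual m x α, nablaDualFD m x α f = 0 → f = 0) ∧
    (∃ g : Fin (m + 1) → RatFunc ℂ,
      (∀ i, g i ∈ OmegaRel1Dual m x α) ∧
      (∀ h ∈ OmegaRel1Dual m x α, ∃ c : Fin (m + 1) → ℂ,
        ∃ f ∈ OmegaRel0Dual m x α,
        h = (∑ i, c i • g i) + nablaDualFD m x α f) ∧
      (∀ c : Fin (m + 1) → ℂ, ∀ f ∈ OmegaRel0Dual m x α,
        (∑ i, c i • g i) = nablaDualFD m x α f → c = 0)) := by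
  rw [omegaRel0Dual_eq, omegaRel1Dual_eq]
  have hsub := filtration_subset_OmegaDual (α := α) hxdist
  refine ⟨fun f hf => nablaDualFD_eq_zero hxdist hsum hf, ?_⟩
  obtain ⟨N₀, hN₀⟩ := exists_sum_orderCutoff_nonpos hsum
  obtain ⟨g, hgW, hspan, hindep⟩ := exists_fin_basis_mod_map_of_strict (d := m + 1) (N₀ := N₀)
    (nablaDualLinear m x α) (filtration m x α 0) (filtration m x α 1) (filtration_mono hxdist 1)
    (fun _ => Submodule.map_le_iff_le_comap.2 fun _ => nablaDualFD_mem_filtration)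
    (fun N f hf => nablaDualFD_eq_zero hxdist hsum (hsub 0 N hf))
    (fun _ N' f hf => mem_filtration_of_nablaDualFD_mem hxdist hsum (hsub 0 N' hf))
    (fun N hN => by
      rw [finrank_filtration, finrank_filtration]
      have := hN₀ N hN
      omega)
  refine ⟨g, fun i => hsub 1 N₀ (hgW i), fun h hh => ?_, fun c f hf hcf => ?_⟩
  · obtain ⟨N, hN, hhN⟩ := exists_mem_filtration hxdist hh N₀
    obtain ⟨c, f, hf, rfl⟩ := hspan N hN h hhN
    exact ⟨c, f, hsub 0 N hf, rfl⟩
  · obtain ⟨N, -, hfN⟩ := exists_mem_filtration hxdist hf 0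
    exact hindep c N f hfN hcf

/-- the kernel of `∇_t^∨ : Ω^0(T^∨,D^∨;L^∨) → Ω^1(T^∨,D^∨;L^∨)`
vanishes, and `H^1_alg(T^∨,D^∨;L^∨) = Ω^1(T^∨,D^∨;L^∨)/∇_t^∨(Ω^0(T^∨,D^∨;L^∨))`
has dimension exactly `m+1`, for all parameters `α`.  The dimension statement
is expressed by the existence of a basis of the quotient of size `m+1`. -/
theorem dual_H0_vanishes_and_dim_H1_dual
    (m : ℕ) (hm : 1 ≤ m) (x α : ℕ → ℂ)
    (hx0 : x 0 = 0) (hx1 : x (m + 1) = 1)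
    (hxdist : ∀ i ≤ m + 1, ∀ j ≤ m + 1, i ≠ j → x i ≠ x j)
    (hsum : ∑ i ∈ Finset.range (m + 3), α i = 0) :
    (∀ f ∈ OmegaRel0Dual m x α, nablaDualFD m x α f = 0 → f = 0) ∧
    (∃ g : Fin (m + 1) → RatFunc ℂ,
      (∀ i, g i ∈ OmegaRel1Dual m x α) ∧
      (∀ h ∈ OmegaRel1Dual m x α, ∃ c : Fin (m + 1) → ℂ,
        ∃ f ∈ OmegaRel0Dual m x α,
        h = (∑ i, c i • g i) + nablaDualFD m x α f) ∧
      (∀ c : Fin (m + 1) → ℂ, ∀ f ∈ OmegaRel0Dual m x α,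
        (∑ i, c i • g i) = nablaDualFD m x α f → c = 0)) :=
  dual_H0_vanishes_and_dim_H1_dual_general m x α hxdist hsum

end
end

section
/- For every j ∈ {1,…,m} and every x in the open unit polydisc, the function G(x) := ∫_1^∞ U(t,x) dt satisfies ∂_jG(x) = b_j · ∫_1^∞ t^{b_1+⋯+b_m−c} · (t−1)^{c−a−1} · (t−x_j)^{−b_j−1} · ∏_{1≤i≤m, i≠j} (t−x_i)^{−b_i} dt; that is, differentiation under the integral sign is valid and ∂/∂x_j applied to the Euler-type integrand multiplies the factor (t−x_j)^{−b_j} by b_j/(t−x_j). -/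
noncomputable section

/-- The open unit polydisc in `ℂ^m`. -/
def unitPolydisc (m : ℕ) : Set (Fin m → ℂ) :=
  {x | ∀ i, ‖x i‖ < 1}

/-- The partial derivative `∂_i F`. -/
def pd {m : ℕ} (F : (Fin m → ℂ) → ℂ) (i : Fin m) (x : Fin m → ℂ) : ℂ :=
  fderiv ℂ F x (Pi.single i 1)

/-- The second partial derivative `∂_i ∂_j F`. -/
def pd2 {m : ℕ} (F : (Fin m → ℂ) → ℂ) (i j : Fin m) (x : Fin m → ℂ) : ℂ :=
  pd (pd F j) i x

/-- The Euler-type integrand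
`U(t,x) = t^{b_1+⋯+b_m-c} (t-1)^{c-a-1} ∏_i (t-x_i)^{-b_i}`. -/
def eulerU (m : ℕ) (a : ℂ) (b : Fin m → ℂ) (c : ℂ) (x : Fin m → ℂ) (t : ℝ) : ℂ :=
  (t : ℂ) ^ ((∑ i, b i) - c) * ((t : ℂ) - 1) ^ (c - a - 1) *
    ∏ i, ((t : ℂ) - x i) ^ (-b i)

/-- The Euler-type integral `G(x) = ∫_1^∞ U(t,x) dt`. -/
def eulerG (m : ℕ) (a : ℂ) (b : Fin m → ℂ) (c : ℂ) (x : Fin m → ℂ) : ℂ :=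
  ∫ t in Set.Ioi (1 : ℝ), eulerU m a b c x t

/-!
For `‖x‖ ≤ r < 1` and `t ≥ 1` one has `(1 - r) t ≤ |t - x_i| ≤ 2 t` and `|arg (t - x_i)| ≤ π`, so
`|U(t,x)| ≤ C t^{-Re c} (t-1)^{Re c - Re a - 1}` uniformly in `x`; this majorant is integrable on
`(1, ∞)` precisely because `0 < Re a < Re c`. Differentiating `(t - x_i)^{-b_i}` turns `U` into
`b_i` times the integrand with parameters `(a + 1, b + e_i, c + 1)`, which satisfy the same
conditions, so the Fréchet derivative in `x` is dominated in the same way and differentiation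
under the integral sign applies.
-/

open MeasureTheory Set Finset

lemma rpow_le_max_rpow_of_mem_Icc {A B u : ℝ} (hA : 0 < A) (hu : u ∈ Icc A B) (p : ℝ) :
    u ^ p ≤ max (A ^ p) (B ^ p) := by
  rcases le_total 0 p with hp | hp
  · exact le_max_of_le_right (Real.rpow_le_rpow (hA.le.trans hu.1) hu.2 hp)
  · exact le_max_of_le_left (Real.rpow_le_rpow_of_nonpos hA hu.1 hp)

lemma exists_norm_cpow_sub_le {r : ℝ} (hr : r < 1) (s : ℂ) :
    ∃ C, ∀ t : ℝ, 1 ≤ t → ∀ w : ℂ, ‖w‖ ≤ r → ‖((t : ℂ) - w) ^ s‖ ≤ C * t ^ s.re := by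
  refine ⟨max ((1 - r) ^ s.re) (2 ^ s.re) * Real.exp (Real.pi * |s.im|), fun t ht w hw => ?_⟩
  have ht0 : 0 < t := by linarith
  have hnorm : ‖(t : ℂ) - w‖ ∈ Icc ((1 - r) * t) (2 * t) := by
    have h1 := norm_sub_norm_le (t : ℂ) w
    have h2 := norm_sub_le (t : ℂ) w
    rw [Complex.norm_real, Real.norm_of_nonneg ht0.le] at h1 h2
    constructor <;> nlinarith [mul_nonneg (norm_nonneg w) (sub_nonneg.2 ht)]
  have hmod : ‖(t : ℂ) - w‖ ^ s.re ≤ max ((1 - r) ^ s.re) (2 ^ s.re) * t ^ s.re := by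
    have hr' : 0 < 1 - r := by linarith
    calc _ ≤ max (((1 - r) * t) ^ s.re) ((2 * t) ^ s.re) :=
          rpow_le_max_rpow_of_mem_Icc (by positivity) hnorm s.re
      _ = _ := by
          rw [Real.mul_rpow hr'.le ht0.le, Real.mul_rpow zero_le_two ht0.le,
            max_mul_of_nonneg _ _ (by positivity)]
  have harg : Real.exp (-(((t : ℂ) - w).arg * s.im)) ≤ Real.exp (Real.pi * |s.im|) := by
    gcongr
    calc _ ≤ |((t : ℂ) - w).arg * s.im| := neg_le_abs _
      _ = |((t : ℂ) - w).arg| * |s.im| := abs_mul _ _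
      _ ≤ _ := by gcongr; exact Complex.abs_arg_le_pi _
  calc _ ≤ ‖(t : ℂ) - w‖ ^ s.re / Real.exp (((t : ℂ) - w).arg * s.im) := Complex.norm_cpow_le _ _
    _ = ‖(t : ℂ) - w‖ ^ s.re * Real.exp (-(((t : ℂ) - w).arg * s.im)) := by
        rw [Real.exp_neg, div_eq_mul_inv]
    _ ≤ max ((1 - r) ^ s.re) (2 ^ s.re) * t ^ s.re * Real.exp (Real.pi * |s.im|) :=
        mul_le_mul hmod harg (by positivity) (by positivity)
    _ = _ := by ring

lemma exists_norm_prod_cpow_sub_le {ι : Type*} (u : Finset ι) {r : ℝ} (hr : r < 1)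
    (s : ι → ℂ) :
    ∃ C, ∀ t : ℝ, 1 ≤ t → ∀ y : ι → ℂ, (∀ i, ‖y i‖ ≤ r) →
      ‖∏ i ∈ u, ((t : ℂ) - y i) ^ s i‖ ≤ C * t ^ ∑ i ∈ u, (s i).re := by
  choose C hC using fun i => exists_norm_cpow_sub_le hr (s i)
  refine ⟨∏ i ∈ u, C i, fun t ht y hy => ?_⟩
  rw [norm_prod, Real.rpow_sum_of_pos (by linarith), ← prod_mul_distrib]
  exact prod_le_prod (fun i _ => norm_nonneg _) fun i _ => hC i t ht (y i) (hy i)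

lemma integrableOn_Ioc_rpow_mul_sub_one_rpow (p : ℝ) {q : ℝ} (hq : -1 < q) :
    IntegrableOn (fun t : ℝ => t ^ p * (t - 1) ^ q) (Ioc 1 2) := by
  have hsing : IntegrableOn (fun t : ℝ => (t - 1) ^ q) (Ioc 1 2) := by
    have h := (intervalIntegral.intervalIntegrable_rpow' (a := 0) (b := 1) hq).comp_sub_right 1
    rw [intervalIntegrable_iff_integrableOn_Ioc_of_le (by norm_num)] at h
    norm_num at h
    exact h
  refine (hsing.const_mul (max (1 ^ p) (2 ^ p))).mono' (by fun_prop) ?_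
  refine ae_restrict_of_forall_mem measurableSet_Ioc fun t ht => ?_
  have ht1 : 0 ≤ t - 1 := by linarith [ht.1]
  rw [norm_mul, Real.norm_of_nonneg (Real.rpow_nonneg (by linarith) p),
    Real.norm_of_nonneg (by positivity)]
  exact mul_le_mul_of_nonneg_right (rpow_le_max_rpow_of_mem_Icc one_pos ⟨ht.1.le, ht.2⟩ p)
    (by positivity)

lemma integrableOn_Ioi_two_rpow_mul_sub_one_rpow {p q : ℝ} (hpq : p + q < -1) :
    IntegrableOn (fun t : ℝ => t ^ p * (t - 1) ^ q) (Ioi 2) := by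
  refine ((integrableOn_Ioi_rpow_of_lt hpq two_pos).const_mul
    (max ((2⁻¹ : ℝ) ^ q) (1 ^ q))).mono' (by fun_prop) ?_
  refine ae_restrict_of_forall_mem measurableSet_Ioi fun t (ht : 2 < t) => ?_
  have ht0 : 0 < t := by linarith
  have ht1 : 0 ≤ t - 1 := by linarith
  have hsub : (t - 1) ^ q ≤ max ((2⁻¹ : ℝ) ^ q) (1 ^ q) * t ^ q := by
    calc (t - 1) ^ q ≤ max ((2⁻¹ * t) ^ q) ((1 * t) ^ q) :=
          rpow_le_max_rpow_of_mem_Icc (by positivity) ⟨by linarith, by linarith⟩ q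
      _ = _ := by
          rw [Real.mul_rpow (by norm_num) ht0.le, Real.mul_rpow zero_le_one ht0.le,
            max_mul_of_nonneg _ _ (by positivity)]
  rw [norm_mul, Real.norm_of_nonneg (by positivity), Real.norm_of_nonneg (by positivity),
    Real.rpow_add ht0]
  calc t ^ p * (t - 1) ^ q ≤ t ^ p * (max ((2⁻¹ : ℝ) ^ q) (1 ^ q) * t ^ q) := by gcongr
    _ = _ := by ring

lemma integrableOn_Ioi_rpow_mul_sub_one_rpow {p q : ℝ} (hq : -1 < q) (hpq : p + q < -1) :
    IntegrableOn (fun t : ℝ => t ^ p * (t - 1) ^ q) (Ioi 1) := by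
  rw [← Ioc_union_Ioi_eq_Ioi one_le_two]
  exact (integrableOn_Ioc_rpow_mul_sub_one_rpow p hq).union
    (integrableOn_Ioi_two_rpow_mul_sub_one_rpow hpq)

section EulerIntegral

variable {m : ℕ} {a : ℂ} {b : Fin m → ℂ} {c : ℂ}

lemma exists_integrable_bound_eulerU (ha : 0 < a.re) (hac : a.re < c.re) {r : ℝ} (hr : r < 1) :
    ∃ g : ℝ → ℝ, IntegrableOn g (Ioi 1) ∧
      ∀ t, 1 < t → ∀ y : Fin m → ℂ, ‖y‖ ≤ r → ‖eulerU m a b c y t‖ ≤ g t := by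
  obtain ⟨C, hC⟩ := exists_norm_prod_cpow_sub_le univ hr (fun i => -b i)
  refine ⟨fun t => C * (t ^ (-c.re) * (t - 1) ^ (c.re - a.re - 1)),
    (integrableOn_Ioi_rpow_mul_sub_one_rpow (by linarith) (by linarith)).const_mul C,
    fun t ht y hy => ?_⟩
  have ht0 : 0 < t := by linarith
  have hprod := hC t ht.le y fun i => (norm_le_pi_norm y i).trans hy
  have hexp : ((∑ i, b i) - c).re + ∑ i, (-b i).re = -c.re := by
    simp [Complex.re_sum]; ring
  rw [eulerU, norm_mul, norm_mul, Complex.norm_cpow_eq_rpow_re_of_pos ht0,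
    show (t : ℂ) - 1 = ((t - 1 : ℝ) : ℂ) by push_cast; ring,
    Complex.norm_cpow_eq_rpow_re_of_pos (by linarith)]
  calc _ ≤ t ^ ((∑ i, b i) - c).re * (t - 1) ^ (c - a - 1).re * (C * t ^ ∑ i, (-b i).re) := by
        gcongr
    _ = C * (t ^ (((∑ i, b i) - c).re + ∑ i, (-b i).re) * (t - 1) ^ (c - a - 1).re) := by
        rw [Real.rpow_add ht0]; ring
    _ = _ := by rw [hexp]; simp

lemma measurable_eulerU (x : Fin m → ℂ) : Measurable (eulerU m a b c x) := by
  unfold eulerU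
  fun_prop

lemma integrableOn_eulerU (ha : 0 < a.re) (hac : a.re < c.re) {x : Fin m → ℂ} (hx : ‖x‖ < 1) :
    IntegrableOn (eulerU m a b c x) (Ioi 1) := by
  obtain ⟨g, hg, hbound⟩ := exists_integrable_bound_eulerU (b := b) ha hac hx
  refine hg.mono' (measurable_eulerU x).aestronglyMeasurable ?_
  exact ae_restrict_of_forall_mem measurableSet_Ioi fun t ht => hbound t ht x le_rfl

lemma eulerU_add_one_add_single (j : Fin m) (x : Fin m → ℂ) (t : ℝ) :
    eulerU m (a + 1) (b + Pi.single j 1) (c + 1) x t =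
      (t : ℂ) ^ ((∑ i, b i) - c) * ((t : ℂ) - 1) ^ (c - a - 1) * ((t : ℂ) - x j) ^ (-b j - 1) *
        ∏ i ∈ univ.erase j, ((t : ℂ) - x i) ^ (-b i) := by
  have hsum : ∑ i, (b + Pi.single j 1 : Fin m → ℂ) i = ∑ i, b i + 1 := by
    simp [sum_add_distrib]
  have hrest : ∀ i ∈ univ.erase j,
      ((t : ℂ) - x i) ^ (-(b + Pi.single j 1 : Fin m → ℂ) i) = ((t : ℂ) - x i) ^ (-b i) :=
    fun i hi => by simp [Pi.single_eq_of_ne (ne_of_mem_erase hi)]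
  rw [eulerU, hsum, ← mul_prod_erase univ _ (mem_univ j), prod_congr rfl hrest]
  simp only [Pi.add_apply, Pi.single_eq_same, neg_add]
  ring_nf

variable (m a b c) in
def eulerUDeriv (x : Fin m → ℂ) (t : ℝ) : (Fin m → ℂ) →L[ℂ] ℂ :=
  ∑ i, (b i * eulerU m (a + 1) (b + Pi.single i 1) (c + 1) x t) •
    (ContinuousLinearMap.proj i : (Fin m → ℂ) →L[ℂ] ℂ)

lemma hasFDerivAt_eulerU {x : Fin m → ℂ} {t : ℝ} (hx : ∀ i, (x i).re < t) :
    HasFDerivAt (eulerU m a b c · t) (eulerUDeriv m a b c x t) x := by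
  have hfactor (i : Fin m) : HasFDerivAt (fun y : Fin m → ℂ => ((t : ℂ) - y i) ^ (-b i))
      ((b i * ((t : ℂ) - x i) ^ (-b i - 1)) • (ContinuousLinearMap.proj i : (Fin m → ℂ) →L[ℂ] ℂ))
      x := by
    have hslit : (t : ℂ) - x i ∈ Complex.slitPlane :=
      Complex.mem_slitPlane_iff.2 (Or.inl (by simpa using hx i))
    have h : HasDerivAt (fun z : ℂ => ((t : ℂ) - z) ^ (-b i))
        (b i * ((t : ℂ) - x i) ^ (-b i - 1)) (x i) :=
      (((hasDerivAt_id (x i)).const_sub (t : ℂ)).cpow_const hslit).congr_deriv (by simp)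
    exact h.comp_hasFDerivAt x
      (ContinuousLinearMap.proj i : (Fin m → ℂ) →L[ℂ] ℂ).hasFDerivAt
  have h := (HasFDerivAt.finsetProd (u := univ) fun i _ => hfactor i).const_mul
    ((t : ℂ) ^ ((∑ i, b i) - c) * ((t : ℂ) - 1) ^ (c - a - 1))
  refine h.congr_fderiv ?_
  simp only [eulerUDeriv, eulerU_add_one_add_single, smul_sum, smul_smul]
  refine sum_congr rfl fun i _ => ?_
  congr 1
  ring

lemma eulerUDeriv_apply_single (x : Fin m → ℂ) (t : ℝ) (j : Fin m) :
    eulerUDeriv m a b c x t (Pi.single j 1) =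
      b j * eulerU m (a + 1) (b + Pi.single j 1) (c + 1) x t := by
  simp [eulerUDeriv, Pi.single_apply]

lemma norm_sum_smul_proj_le {𝕜 ι : Type*} [NontriviallyNormedField 𝕜] [Fintype ι] (d : ι → 𝕜) :
    ‖∑ i, d i • (ContinuousLinearMap.proj i : (ι → 𝕜) →L[𝕜] 𝕜)‖ ≤ ∑ i, ‖d i‖ :=
  ContinuousLinearMap.opNorm_le_bound _ (by positivity) fun y => by
    simp only [FunLike.coe_sum, Finset.sum_apply, FunLike.coe_smul, Pi.smul_apply, smul_eq_mul,
      sum_mul]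
    exact (norm_sum_le _ _).trans (sum_le_sum fun i _ => by
      rw [norm_mul]; gcongr; exact norm_le_pi_norm y i)

lemma exists_integrable_bound_eulerUDeriv (ha : 0 < a.re) (hac : a.re < c.re) {r : ℝ}
    (hr : r < 1) :
    ∃ g : ℝ → ℝ, IntegrableOn g (Ioi 1) ∧
      ∀ t, 1 < t → ∀ y : Fin m → ℂ, ‖y‖ ≤ r → ‖eulerUDeriv m a b c y t‖ ≤ g t := by
  choose g hg hbound using fun i : Fin m =>
    exists_integrable_bound_eulerU (a := a + 1) (b := b + Pi.single i 1) (c := c + 1)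
      (by simp; linarith) (by simp; linarith) hr
  refine ⟨fun t => ∑ i, ‖b i‖ * g i t,
    integrable_finsetSum _ fun i _ => (hg i).const_mul _, fun t ht y hy => ?_⟩
  refine (norm_sum_smul_proj_le _).trans (sum_le_sum fun i _ => ?_)
  rw [norm_mul]
  exact mul_le_mul_of_nonneg_left (hbound i t ht y hy) (norm_nonneg _)

lemma integrableOn_eulerUDeriv (ha : 0 < a.re) (hac : a.re < c.re) {x : Fin m → ℂ}
    (hx : ‖x‖ < 1) : IntegrableOn (eulerUDeriv m a b c x) (Ioi 1) := by
  refine integrable_finsetSum (f := fun i t => (b i * eulerU m (a + 1) (b + Pi.single i 1) (c + 1)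
    x t) • (ContinuousLinearMap.proj i : (Fin m → ℂ) →L[ℂ] ℂ)) _ fun i _ => ?_
  have h := integrableOn_eulerU (a := a + 1) (b := b + Pi.single i 1) (c := c + 1)
    (by simp; linarith) (by simp; linarith) hx
  exact (h.const_mul (b i)).smul_const _

lemma hasFDerivAt_eulerG (ha : 0 < a.re) (hac : a.re < c.re) {x : Fin m → ℂ} (hx : ‖x‖ < 1) :
    HasFDerivAt (eulerG m a b c) (∫ t in Ioi 1, eulerUDeriv m a b c x t) x := by
  obtain ⟨r, hxr, hr⟩ := exists_between hx
  obtain ⟨g, hg, hbound⟩ := exists_integrable_bound_eulerUDeriv (b := b) ha hac hr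
  refine hasFDerivAt_integral_of_dominated_of_fderiv_le
    (Metric.isOpen_ball.mem_nhds (mem_ball_zero_iff.2 hxr))
    (Filter.Eventually.of_forall fun y => (measurable_eulerU y).aestronglyMeasurable)
    (integrableOn_eulerU ha hac hx) (integrableOn_eulerUDeriv ha hac hx).aestronglyMeasurable
    ?_ hg ?_
  · exact ae_restrict_of_forall_mem measurableSet_Ioi fun t ht y hy =>
      hbound t ht y (mem_ball_zero_iff.1 hy).le
  · refine ae_restrict_of_forall_mem measurableSet_Ioi fun t (ht : 1 < t) y hy =>
      hasFDerivAt_eulerU fun i => ?_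
    calc (y i).re ≤ ‖y i‖ := Complex.re_le_norm _
      _ ≤ ‖y‖ := norm_le_pi_norm y i
      _ < t := by linarith [mem_ball_zero_iff.1 hy]

end EulerIntegral

theorem eulerG_partial_deriv_general
    (m : ℕ) (a : ℂ) (b : Fin m → ℂ) (c : ℂ)
    (ha : 0 < a.re) (hac : a.re < c.re)
    (j : Fin m) (x : Fin m → ℂ) (hx : ∀ i, ‖x i‖ < 1) :
    pd (eulerG m a b c) j x =
      b j * ∫ t in Set.Ioi (1 : ℝ),
        (t : ℂ) ^ ((∑ i, b i) - c) * ((t : ℂ) - 1) ^ (c - a - 1) *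
          ((t : ℂ) - x j) ^ (-b j - 1) *
          ∏ i ∈ Finset.univ.erase j, ((t : ℂ) - x i) ^ (-b i) := by
  have hx' : ‖x‖ < 1 := (pi_norm_lt_iff one_pos).2 hx
  rw [pd, (hasFDerivAt_eulerG ha hac hx').fderiv,
    ContinuousLinearMap.integral_apply (integrableOn_eulerUDeriv ha hac hx'),
    ← integral_const_mul]
  simp_rw [eulerUDeriv_apply_single, eulerU_add_one_add_single]

/-- differentiation under the integral sign for the Euler-type
integral: `∂_j G(x) = b_j ∫_1^∞ t^{Σb-c}(t-1)^{c-a-1}(t-x_j)^{-b_j-1}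
∏_{i≠j}(t-x_i)^{-b_i} dt` on the unit polydisc. -/
theorem eulerG_partial_deriv
    (m : ℕ) (hm : 1 ≤ m) (a : ℂ) (b : Fin m → ℂ) (c : ℂ)
    (ha : 0 < a.re) (hac : a.re < c.re)
    (j : Fin m) (x : Fin m → ℂ) (hx : ∀ i, ‖x i‖ < 1) :
    pd (eulerG m a b c) j x =
      b j * ∫ t in Set.Ioi (1 : ℝ),
        (t : ℂ) ^ ((∑ i, b i) - c) * ((t : ℂ) - 1) ^ (c - a - 1) *
          ((t : ℂ) - x j) ^ (-b j - 1) *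
          ∏ i ∈ Finset.univ.erase j, ((t : ℂ) - x i) ^ (-b i) :=
  eulerG_partial_deriv_general m a b c ha hac j x hx

end
end

section
/- The matrix C is invertible and H = Ψ·C^{−1}·Φ (equivalently, C = Φ·H^{−1}·Ψ). This is the twisted period relation for Lauricella's system F_D with m = 2 and exponents (α_0, α_1, α_2, α_3, α_4) = (0, 0, 0, 1, −1). -/
noncomputable section

/-- The period matrix `Φ`. -/
def PhiTPR2 (x₁ x₂ : ℂ) : Matrix (Fin 3) (Fin 3) ℂ :=
  !![-1, x₁ - 1, x₂ - 1;
     1, (x₁ - 1) ^ 2, (x₂ - 1) ^ 2;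
     -1, (x₁ - 1) ^ 3, (x₂ - 1) ^ 3]

/-- The homological intersection matrix `H = -E_3`. -/
def HTPR2 : Matrix (Fin 3) (Fin 3) ℂ := -(1 : Matrix (Fin 3) (Fin 3) ℂ)

/-- The dual period matrix `Ψ = 2πi·diag(-1, 1/(x₁-1), 1/(x₂-1))`. -/
def PsiTPR2 (x₁ x₂ : ℂ) : Matrix (Fin 3) (Fin 3) ℂ :=
  (2 * (Real.pi : ℂ) * Complex.I) •
    Matrix.diagonal ![-1, (x₁ - 1)⁻¹, (x₂ - 1)⁻¹]

/-- The cohomological intersection matrix `C`. -/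
def CTPR2 (x₁ x₂ : ℂ) : Matrix (Fin 3) (Fin 3) ℂ :=
  (-(2 * (Real.pi : ℂ) * Complex.I)) •
    !![1, 1, 1;
       -1, x₁ - 1, x₂ - 1;
       1, (x₁ - 1) ^ 2, (x₂ - 1) ^ 2]

/-- the twisted period relation for Lauricella's `F_D` with
`m = 2` and exponents `(α_0,…,α_4) = (0,0,0,1,-1)`: `C` is invertible and
`H = Ψ C⁻¹ Φ` (equivalently, `C = Φ H⁻¹ Ψ`). -/
theorem twisted_period_relation_integer_params_mixed
    (x₁ x₂ : ℂ) (h12 : x₁ ≠ x₂)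
    (h₁0 : x₁ ≠ 0) (h₁1 : x₁ ≠ 1) (h₂0 : x₂ ≠ 0) (h₂1 : x₂ ≠ 1) :
    IsUnit (CTPR2 x₁ x₂) ∧
    HTPR2 = PsiTPR2 x₁ x₂ * (CTPR2 x₁ x₂)⁻¹ * PhiTPR2 x₁ x₂ ∧
    CTPR2 x₁ x₂ = PhiTPR2 x₁ x₂ * HTPR2⁻¹ * PsiTPR2 x₁ x₂ := by
  have hpi : (2 * (Real.pi : ℂ) * Complex.I) ≠ 0 := by
    simp [Real.pi_ne_zero, Complex.I_ne_zero, Complex.ofReal_ne_zero]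
  have h1 : x₁ - 1 ≠ 0 := sub_ne_zero.mpr h₁1
  have h2 : x₂ - 1 ≠ 0 := sub_ne_zero.mpr h₂1
  have h12' : x₂ - x₁ ≠ 0 := sub_ne_zero.mpr (Ne.symm h12)
  have hH : HTPR2⁻¹ = -1 := by
    rw [HTPR2]; exact Matrix.inv_eq_right_inv (by simp)
  have hdetC : (CTPR2 x₁ x₂).det ≠ 0 := by
    have : (CTPR2 x₁ x₂).det =
        (-(2 * (Real.pi : ℂ) * Complex.I))^3 * (x₁ * x₂ * (x₂ - x₁)) := by
      simp [CTPR2, Matrix.det_fin_three, Matrix.smul_apply]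
      ring
    rw [this]
    exact mul_ne_zero (pow_ne_zero _ (neg_ne_zero.mpr hpi))
      (mul_ne_zero (mul_ne_zero h₁0 h₂0) h12')
  have hdetPhi : (PhiTPR2 x₁ x₂).det ≠ 0 := by
    have : (PhiTPR2 x₁ x₂).det =
        -((x₁ - 1) * (x₂ - 1) * x₁ * x₂ * (x₂ - x₁)) := by
      simp [PhiTPR2, Matrix.det_fin_three]
      ring
    rw [this]
    exact neg_ne_zero.mpr (mul_ne_zero (mul_ne_zero (mul_ne_zero
      (mul_ne_zero h1 h2) h₁0) h₂0) h12')
  have hdetPsi : (PsiTPR2 x₁ x₂).det ≠ 0 := by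
    have : (PsiTPR2 x₁ x₂).det =
        (2 * (Real.pi : ℂ) * Complex.I)^3 * (-((x₁ - 1)⁻¹ * (x₂ - 1)⁻¹)) := by
      simp [PsiTPR2, Matrix.det_fin_three, Matrix.smul_apply, Matrix.diagonal]
      ring
    rw [this]
    exact mul_ne_zero (pow_ne_zero _ hpi)
      (neg_ne_zero.mpr (mul_ne_zero (inv_ne_zero h1) (inv_ne_zero h2)))
  have hC : CTPR2 x₁ x₂ = PhiTPR2 x₁ x₂ * HTPR2⁻¹ * PsiTPR2 x₁ x₂ := by
    rw [hH]
    ext i j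
    fin_cases i <;> fin_cases j <;>
      · simp [CTPR2, PhiTPR2, PsiTPR2, Matrix.mul_apply, Fin.sum_univ_three,
          Matrix.diagonal, Matrix.smul_apply]
        try field_simp
        try ring
  refine ⟨(Matrix.isUnit_iff_isUnit_det _).mpr (isUnit_iff_ne_zero.mpr hdetC), ?_, hC⟩
  have hPhi := Matrix.nonsing_inv_mul _ (isUnit_iff_ne_zero.mpr hdetPhi)
  have hPsi := Matrix.mul_nonsing_inv _ (isUnit_iff_ne_zero.mpr hdetPsi)
  rw [hC, hH, Matrix.mul_inv_rev, Matrix.mul_inv_rev]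
  symm
  calc PsiTPR2 x₁ x₂ * ((PsiTPR2 x₁ x₂)⁻¹ * ((-1)⁻¹ * (PhiTPR2 x₁ x₂)⁻¹)) *
        PhiTPR2 x₁ x₂
      = (PsiTPR2 x₁ x₂ * (PsiTPR2 x₁ x₂)⁻¹) * (-1)⁻¹ *
        ((PhiTPR2 x₁ x₂)⁻¹ * PhiTPR2 x₁ x₂) := by noncomm_ring
    _ = HTPR2 := by
        rw [hPhi, hPsi]
        have : ((-1 : Matrix (Fin 3) (Fin 3) ℂ))⁻¹ = -1 :=
          Matrix.inv_eq_right_inv (by simp)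
        simp [this, HTPR2]

end
end
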